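/- arXiv:2202.01571 — 6 statements merged into one kernel-verified Lean document; each statement's English description precedes it below -/
import Mathlib

section
/- For a strictly convex continuous function H : [0,∞) → ℝ with H'(t) → −∞ as t → 0⁺, any cost vector c ∈ ℝⁿ, ε > 0, and a nonempty polytope P = {x ∈ ℝⁿ : Ax = b, x ≥ 0} with a strictly positive point, the function x ↦ c·x + ε·Σᵢ H(xᵢ) attains a unique minimizer over P, and this minimizer has all coordinates strictly positive. -/
open Filter

/-- The slope of `H` at `0` tends to `-∞` as the right endpoint tends to `0⁺`. -/
private lemma aux_slope_atBot {H : ℝ → ℝ}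
    (hconv : StrictConvexOn ℝ (Set.Ici (0 : ℝ)) H)
    (hdiff : DifferentiableOn ℝ H (Set.Ioi (0 : ℝ)))
    (hderiv : Tendsto (deriv H) (nhdsWithin 0 (Set.Ioi 0)) atBot) :
    Tendsto (fun s => (H s - H 0) / s) (nhdsWithin 0 (Set.Ioi 0)) atBot := by
  apply tendsto_atBot_mono' _ _ hderiv
  filter_upwards [self_mem_nhdsWithin] with s hs
  have hs' : (0 : ℝ) < s := hs
  have hd : DifferentiableAt ℝ H s :=
    (hdiff s hs).differentiableAt (isOpen_Ioi.mem_nhds hs')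
  have := hconv.convexOn.slope_le_deriv Set.self_mem_Ici (le_of_lt hs') hs' hd
  simpa [slope_def_field] using this

/-- For a strictly convex continuous `H : [0,∞) → ℝ`, differentiable on
`(0,∞)` with `H'(t) → −∞` as `t → 0⁺`, any `c ∈ ℝⁿ`, `ε > 0`, and a
nonempty compact polytope `P = {x : Ax = b, x ≥ 0}` containing a strictly
positive point, the function `x ↦ c·x + ε Σᵢ H(xᵢ)` has a unique minimizer
over `P`, which has all coordinates strictly positive. -/
theorem entropic_regularization_unique_positive_minimizer
    (d n : ℕ) (A : Matrix (Fin d) (Fin n) ℝ) (b : Fin d → ℝ)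
    (c : Fin n → ℝ) (ε : ℝ) (hε : 0 < ε)
    (H : ℝ → ℝ)
    (hconv : StrictConvexOn ℝ (Set.Ici (0 : ℝ)) H)
    (hcont : ContinuousOn H (Set.Ici (0 : ℝ)))
    (hdiff : DifferentiableOn ℝ H (Set.Ioi (0 : ℝ)))
    (hderiv : Tendsto (deriv H) (nhdsWithin 0 (Set.Ioi 0)) atBot)
    (P : Set (Fin n → ℝ))
    (hP : P = {x : Fin n → ℝ | A.mulVec x = b ∧ ∀ j, 0 ≤ x j})
    (hPc : IsCompact P)
    (hpos : ∃ x ∈ P, ∀ j, 0 < x j) :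
    ∃ x : Fin n → ℝ,
      (x ∈ P ∧ (∀ j, 0 < x j) ∧
        ∀ y ∈ P, (∑ j, c j * x j) + ε * ∑ j, H (x j) ≤
                 (∑ j, c j * y j) + ε * ∑ j, H (y j)) ∧
      ∀ x' : Fin n → ℝ,
        (x' ∈ P ∧ ∀ y ∈ P, (∑ j, c j * x' j) + ε * ∑ j, H (x' j) ≤
                           (∑ j, c j * y j) + ε * ∑ j, H (y j)) →
        x' = x := by
  classical
  obtain ⟨z, hzP, hzpos⟩ := hpos
  set f : (Fin n → ℝ) → ℝ := fun x => (∑ j, c j * x j) + ε * ∑ j, H (x j) with hfdef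
  -- nonnegativity of points of P
  have hPnn : ∀ x ∈ P, ∀ j, (0 : ℝ) ≤ x j := by
    intro x hx j
    rw [hP] at hx
    exact hx.2 j
  -- P is convex
  have hPconv : Convex ℝ P := by
    rw [hP]
    intro x hx y hy a₁ a₂ ha₁ ha₂ hsum
    refine ⟨?_, fun j => ?_⟩
    · have : A.mulVec (a₁ • x + a₂ • y) = a₁ • A.mulVec x + a₂ • A.mulVec y := by
        rw [Matrix.mulVec_add, Matrix.mulVec_smul, Matrix.mulVec_smul]
      rw [this, hx.1, hy.1, ← add_smul, hsum, one_smul]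
    · have := add_nonneg (mul_nonneg ha₁ (hx.2 j)) (mul_nonneg ha₂ (hy.2 j))
      simpa [smul_eq_mul] using this
  -- f is continuous on P
  have hfc : ContinuousOn f P := by
    apply ContinuousOn.add
    · exact (continuous_finset_sum _ fun j _ =>
        continuous_const.mul (continuous_apply j)).continuousOn
    · refine continuousOn_const.mul ?_
      apply continuousOn_finset_sum
      intro j _
      exact hcont.comp (continuous_apply j).continuousOn
        (fun x hx => hPnn x hx j)
  -- existence of a minimizer
  obtain ⟨x, hxP, hxmin⟩ := hPc.exists_isMinOn ⟨z, hzP⟩ hfc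
  have hmin : ∀ y ∈ P, f x ≤ f y := fun y hy => hxmin hy
  -- the minimizer has positive coordinates
  have hxpos : ∀ j, 0 < x j := by
    by_contra hcon
    push_neg at hcon
    obtain ⟨j0, hj0⟩ := hcon
    have hx0 : x j0 = 0 := le_antisymm hj0 (hPnn x hxP j0)
    set v : Fin n → ℝ := fun j => z j - x j with hvdef
    set term : Fin n → ℝ → ℝ :=
      fun j t => (H (x j + t * v j) - H (x j)) / t with htermdef
    set Q : ℝ → ℝ := fun t => (∑ j, c j * v j) + ε * ∑ j, term j t with hQdef
    set γ : ℝ → (Fin n → ℝ) := fun t => x + t • v with hγdef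
    -- γ t ∈ P for t ∈ [0,1]
    have hγP : ∀ t ∈ Set.Icc (0 : ℝ) 1, γ t ∈ P := by
      intro t ht
      have : γ t = (1 - t) • x + t • z := by
        funext j
        simp [γ, v, smul_eq_mul]
        ring
      rw [this]
      exact hPconv hxP hzP (by linarith [ht.2]) ht.1 (by ring)
    -- algebra: Q t = (f (γ t) - f x) / t for t ≠ 0
    have hkey : ∀ t : ℝ, t ≠ 0 → Q t = (f (γ t) - f x) / t := by
      intro t ht
      rw [eq_div_iff ht]
      have h1 : ∀ j, H (x j + t * v j) - H (x j) = term j t * t :=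
        fun j => (div_mul_cancel₀ _ ht).symm
      have e1 : ∑ j, c j * (x j + t * v j)
          = (∑ j, c j * x j) + (∑ j, c j * v j) * t := by
        rw [Finset.sum_mul, ← Finset.sum_add_distrib]
        apply Finset.sum_congr rfl
        intro j _; ring
      have e2 : ∑ j, H (x j + t * v j)
          = (∑ j, H (x j)) + (∑ j, term j t) * t := by
        rw [Finset.sum_mul, ← Finset.sum_add_distrib]
        apply Finset.sum_congr rfl
        intro j _
        have := h1 j
        linarith
      have : f (γ t) - f x
          = (∑ j, c j * v j) * t + ε * ((∑ j, term j t) * t) := by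
        simp only [hfdef, γ, Pi.add_apply, Pi.smul_apply, smul_eq_mul]
        rw [e1, e2]
        ring
      rw [this]; ring
    -- Q is nonnegative on (0,1]
    have hQnn : ∀ t ∈ Set.Ioc (0 : ℝ) 1, 0 ≤ Q t := by
      intro t ht
      rw [hkey t (ne_of_gt ht.1)]
      apply div_nonneg _ ht.1.le
      have := hmin (γ t) (hγP t ⟨ht.1.le, ht.2⟩)
      linarith
    -- each coordinate term is eventually bounded above
    have hbound : ∀ j : Fin n, ∃ K : ℝ,
        ∀ᶠ t in nhdsWithin (0 : ℝ) (Set.Ioi 0), term j t ≤ K := by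
      intro j
      by_cases hxj : x j = 0
      · -- term j tends to -∞
        have hvj : 0 < v j := by simp [v, hxj, hzpos j]
        have hmaps : Tendsto (fun t : ℝ => t * v j)
            (nhdsWithin 0 (Set.Ioi 0)) (nhdsWithin 0 (Set.Ioi 0)) := by
          apply Tendsto.inf
          · have : Tendsto (fun t : ℝ => t * v j) (nhds 0) (nhds (0 * v j)) :=
              (continuous_id.mul continuous_const).tendsto 0
            simpa using this
          · apply tendsto_principal_principal.2
            intro t ht
            exact mul_pos ht hvj
        have hslope := (aux_slope_atBot hconv hdiff hderiv).comp hmaps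
        have heq : ∀ᶠ t in nhdsWithin (0 : ℝ) (Set.Ioi 0),
            v j * ((H (t * v j) - H 0) / (t * v j)) = term j t := by
          filter_upwards [self_mem_nhdsWithin] with t ht
          have ht' : (0 : ℝ) < t := ht
          rw [htermdef]
          simp only [hxj, zero_add]
          field_simp
        have hatBot : Tendsto (term j) (nhdsWithin (0 : ℝ) (Set.Ioi 0)) atBot :=
          Tendsto.congr' heq (hslope.const_mul_atBot hvj)
        exact ⟨0, hatBot.eventually_le_atBot 0⟩
      · -- x j > 0 : term j converges
        have hxj' : 0 < x j := lt_of_le_of_ne (hPnn x hxP j) (Ne.symm hxj)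
        set D := deriv H (x j) with hD
        have hH : HasDerivAt H D (x j) :=
          ((hdiff (x j) hxj').differentiableAt
            (isOpen_Ioi.mem_nhds hxj')).hasDerivAt
        have hu : HasDerivAt (fun t : ℝ => x j + t * v j) (v j) 0 := by
          simpa using ((hasDerivAt_id (0 : ℝ)).mul_const (v j)).const_add (x j)
        have hg : HasDerivAt (fun t : ℝ => H (x j + t * v j))
            (D * v j) 0 := by
          have h0 : x j = x j + (0 : ℝ) * v j := by ring
          rw [h0] at hH
          exact HasDerivAt.comp 0 hH hu
        have hslope := hasDerivAt_iff_tendsto_slope.1 hg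
        have hmono : nhdsWithin (0 : ℝ) (Set.Ioi 0)
            ≤ nhdsWithin (0 : ℝ) {(0 : ℝ)}ᶜ :=
          nhdsWithin_mono 0 (fun t ht => ne_of_gt ht)
        have hterm : Tendsto (term j) (nhdsWithin (0 : ℝ) (Set.Ioi 0))
            (nhds (D * v j)) := by
          refine Tendsto.congr' ?_ (hslope.mono_left hmono)
          filter_upwards [self_mem_nhdsWithin] with t ht
          have ht' : (0 : ℝ) < t := ht
          simp [slope_def_field, term]
        exact ⟨D * v j + 1,
          (hterm.eventually (eventually_le_nhds (by linarith)))⟩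
    choose K hK using hbound
    -- the sum over j ≠ j0 is eventually bounded
    have hsumbound : ∀ᶠ t in nhdsWithin (0 : ℝ) (Set.Ioi 0),
        ∑ j ∈ Finset.univ.erase j0, term j t
          ≤ ∑ j ∈ Finset.univ.erase j0, K j := by
      have : ∀ᶠ t in nhdsWithin (0 : ℝ) (Set.Ioi 0),
          ∀ j ∈ Finset.univ.erase j0, term j t ≤ K j := by
        rw [eventually_all_finset]
        intro j _
        exact hK j
      filter_upwards [this] with t ht
      exact Finset.sum_le_sum ht
    -- term j0 tends to atBot
    have hvj0 : 0 < v j0 := by simp [v, hx0, hzpos j0]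
    have hmaps0 : Tendsto (fun t : ℝ => t * v j0)
        (nhdsWithin 0 (Set.Ioi 0)) (nhdsWithin 0 (Set.Ioi 0)) := by
      apply Tendsto.inf
      · have : Tendsto (fun t : ℝ => t * v j0) (nhds 0) (nhds (0 * v j0)) :=
          (continuous_id.mul continuous_const).tendsto 0
        simpa using this
      · apply tendsto_principal_principal.2
        intro t ht
        exact mul_pos ht hvj0
    have hterm0 : Tendsto (term j0) (nhdsWithin (0 : ℝ) (Set.Ioi 0)) atBot := by
      have hslope := (aux_slope_atBot hconv hdiff hderiv).comp hmaps0
      refine Tendsto.congr' ?_ (hslope.const_mul_atBot hvj0)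
      filter_upwards [self_mem_nhdsWithin] with t ht
      have ht' : (0 : ℝ) < t := ht
      rw [htermdef]
      simp only [hx0, zero_add]
      field_simp
      simp only [Function.comp_apply]
      field_simp
    -- Q tends to atBot
    have hQatBot : Tendsto Q (nhdsWithin (0 : ℝ) (Set.Ioi 0)) atBot := by
      have hsums : Tendsto (fun t => ∑ j, term j t)
          (nhdsWithin (0 : ℝ) (Set.Ioi 0)) atBot := by
        apply tendsto_atBot_mono'
          (nhdsWithin (0 : ℝ) (Set.Ioi 0))
          (f₁ := fun t => term j0 t + ∑ j ∈ Finset.univ.erase j0, K j)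
        · filter_upwards [hsumbound] with t ht
          rw [← Finset.add_sum_erase _ _ (Finset.mem_univ j0)]
          linarith
        · exact tendsto_atBot_add_const_right _ _ hterm0
      have : Tendsto (fun t => ε * ∑ j, term j t)
          (nhdsWithin (0 : ℝ) (Set.Ioi 0)) atBot := hsums.const_mul_atBot hε
      simpa [hQdef] using tendsto_atBot_add_const_left _ _ this
    -- contradiction
    have hev : ∀ᶠ t in nhdsWithin (0 : ℝ) (Set.Ioi 0), Q t < 0 :=
      hQatBot.eventually (eventually_lt_atBot 0)
    have hev2 : ∀ᶠ t in nhdsWithin (0 : ℝ) (Set.Ioi 0), t ≤ 1 := by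
      have : Set.Ioc (0 : ℝ) 1 ∈ nhdsWithin (0 : ℝ) (Set.Ioi 0) := by
        apply Ioc_mem_nhdsGT_of_mem
        exact ⟨le_refl 0, zero_lt_one⟩
      filter_upwards [this] with t ht
      exact ht.2
    have : ∀ᶠ t in nhdsWithin (0 : ℝ) (Set.Ioi 0), False := by
      filter_upwards [hev, hev2, self_mem_nhdsWithin] with t h1 h2 h3
      exact absurd (hQnn t ⟨h3, h2⟩) (not_le.2 h1)
    exact this.exists.elim (fun _ h => h)
  -- uniqueness
  refine ⟨x, ⟨hxP, hxpos, hmin⟩, ?_⟩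
  rintro x' ⟨hx'P, hx'min⟩
  by_contra hne
  obtain ⟨j1, hj1⟩ : ∃ j, x' j ≠ x j := by
    by_contra h
    push_neg at h
    exact hne (funext h)
  have hfx : f x' = f x := le_antisymm (hx'min x hxP) (hmin x' hx'P)
  set w : Fin n → ℝ := (1/2 : ℝ) • x' + (1/2 : ℝ) • x with hwdef
  have hwP : w ∈ P := hPconv hx'P hxP (by norm_num) (by norm_num) (by norm_num)
  have hHsum : ∑ j, H (w j) < (1/2 : ℝ) * ∑ j, H (x' j) + (1/2 : ℝ) * ∑ j, H (x j) := by
    rw [Finset.mul_sum, Finset.mul_sum, ← Finset.sum_add_distrib]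
    apply Finset.sum_lt_sum
    · intro j _
      have := hconv.convexOn.2 (hPnn x' hx'P j) (hPnn x hxP j)
        (by norm_num : (0:ℝ) ≤ 1/2) (by norm_num : (0:ℝ) ≤ 1/2) (by norm_num)
      simpa [w, smul_eq_mul] using this
    · refine ⟨j1, Finset.mem_univ j1, ?_⟩
      have := hconv.2 (hPnn x' hx'P j1) (hPnn x hxP j1) hj1
        (by norm_num : (0:ℝ) < 1/2) (by norm_num : (0:ℝ) < 1/2) (by norm_num)
      simpa [w, smul_eq_mul] using this
  have hlin : ∑ j, c j * w j
      = (1/2 : ℝ) * ∑ j, c j * x' j + (1/2 : ℝ) * ∑ j, c j * x j := by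
    rw [Finset.mul_sum, Finset.mul_sum, ← Finset.sum_add_distrib]
    apply Finset.sum_congr rfl
    intro j _
    simp [w, smul_eq_mul]
    ring
  have hfw : f w < f x := by
    have h1 : ε * ∑ j, H (w j)
        < ε * ((1/2 : ℝ) * ∑ j, H (x' j) + (1/2 : ℝ) * ∑ j, H (x j)) :=
      (mul_lt_mul_iff_right₀ hε).2 hHsum
    have h1' : ε * ∑ j, H (w j)
        < (1/2 : ℝ) * (ε * ∑ j, H (x' j)) + (1/2 : ℝ) * (ε * ∑ j, H (x j)) := by
      linear_combination h1
    have : f w < (1/2 : ℝ) * f x' + (1/2 : ℝ) * f x := by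
      simp only [hfdef]
      rw [hlin]
      linarith
    rw [hfx] at this
    calc f w < 1 / 2 * f x + 1 / 2 * f x := this
    _ = f x := by ring
  exact absurd (hmin w hwP) (not_le.2 hfw)
end

section
/- The feasibility cone for the conic coupling problem equals the explicitly described cone: pos(A) = { y ∈ ℝ^{d₁+d₂}_{≥0} : y₁ + ⋯ + y_{d₁} ≤ e₁·(y_{d₁+1} + ⋯ + y_{d₁+d₂}) and y_{d₁+1} + ⋯ + y_{d₁+d₂} ≤ e₂·(y₁ + ⋯ + y_{d₁}) }. -/
lemma conic_redA (d₁ d₂ e₁ e₂ : ℕ) (c : Fin d₁ → Fin e₁ → Fin d₂ → Fin e₂ → ℝ) (κ' : Fin d₁) :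
    ∑ κ : Fin d₁, ∑ i : Fin e₁, ∑ lam : Fin d₂, ∑ j : Fin e₂,
        c κ i lam j * (((i : ℕ) + 1 : ℝ) * (if κ = κ' then 1 else 0))
      = ∑ i : Fin e₁, ∑ lam : Fin d₂, ∑ j : Fin e₂, c κ' i lam j * ((i : ℕ) + 1 : ℝ) := by
  simp only [mul_ite, mul_one, mul_zero, Finset.sum_ite_irrel, Finset.sum_const_zero,
    Finset.sum_ite_eq', Finset.mem_univ, if_true]

lemma conic_redB (d₁ d₂ e₁ e₂ : ℕ) (c : Fin d₁ → Fin e₁ → Fin d₂ → Fin e₂ → ℝ) (lam' : Fin d₂) :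
    ∑ κ : Fin d₁, ∑ i : Fin e₁, ∑ lam : Fin d₂, ∑ j : Fin e₂,
        c κ i lam j * (((j : ℕ) + 1 : ℝ) * (if lam = lam' then 1 else 0))
      = ∑ κ : Fin d₁, ∑ i : Fin e₁, ∑ j : Fin e₂, c κ i lam' j * ((j : ℕ) + 1 : ℝ) := by
  simp only [mul_ite, mul_one, mul_zero, Finset.sum_ite_irrel, Finset.sum_const_zero,
    Finset.sum_ite_eq', Finset.mem_univ, if_true]

/-- The feasibility cone of the conic coupling problem: the set of nonnegative
combinations of the columns `i·e_κ ⊕ j·e_λ` (for `κ ∈ [d₁]`, `i ∈ [e₁]`,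
`λ ∈ [d₂]`, `j ∈ [e₂]`) equals the explicitly described cone. Here points of
`ℝ^{d₁+d₂}` are represented as pairs in `(Fin d₁ → ℝ) × (Fin d₂ → ℝ)`, and
`i : Fin e₁` stands for the integer `i+1`, etc. -/
theorem conic_coupling_feasibility_cone
    (d₁ d₂ e₁ e₂ : ℕ) (hd₁ : 2 ≤ d₁) (hd₂ : 2 ≤ d₂) (he₁ : 2 ≤ e₁) (he₂ : 2 ≤ e₂) :
    {y : (Fin d₁ → ℝ) × (Fin d₂ → ℝ) |
      ∃ c : Fin d₁ → Fin e₁ → Fin d₂ → Fin e₂ → ℝ,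
        (∀ κ i lam j, 0 ≤ c κ i lam j) ∧
        (∀ κ', y.1 κ' = ∑ κ : Fin d₁, ∑ i : Fin e₁, ∑ lam : Fin d₂, ∑ j : Fin e₂,
            c κ i lam j * (((i : ℕ) + 1 : ℝ) * (if κ = κ' then 1 else 0))) ∧
        (∀ lam', y.2 lam' = ∑ κ : Fin d₁, ∑ i : Fin e₁, ∑ lam : Fin d₂, ∑ j : Fin e₂,
            c κ i lam j * (((j : ℕ) + 1 : ℝ) * (if lam = lam' then 1 else 0)))} =
    {y : (Fin d₁ → ℝ) × (Fin d₂ → ℝ) |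
      (∀ κ, 0 ≤ y.1 κ) ∧ (∀ lam, 0 ≤ y.2 lam) ∧
      (∑ κ, y.1 κ) ≤ e₁ * (∑ lam, y.2 lam) ∧
      (∑ lam, y.2 lam) ≤ e₂ * (∑ κ, y.1 κ)} := by
  ext y
  simp only [Set.mem_setOf_eq]
  constructor
  · rintro ⟨c, hc, h1, h2⟩
    have h1' : ∀ κ', y.1 κ' = ∑ i : Fin e₁, ∑ lam : Fin d₂, ∑ j : Fin e₂,
        c κ' i lam j * ((i : ℕ) + 1 : ℝ) := fun κ' => (h1 κ').trans (conic_redA _ _ _ _ c κ')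
    have h2' : ∀ lam', y.2 lam' = ∑ κ : Fin d₁, ∑ i : Fin e₁, ∑ j : Fin e₂,
        c κ i lam' j * ((j : ℕ) + 1 : ℝ) := fun lam' => (h2 lam').trans (conic_redB _ _ _ _ c lam')
    have hy1 : ∀ κ, 0 ≤ y.1 κ := by
      intro κ; rw [h1' κ]
      refine Finset.sum_nonneg fun i _ => Finset.sum_nonneg fun lam _ =>
        Finset.sum_nonneg fun j _ => mul_nonneg (hc _ _ _ _) (by positivity)
    have hy2 : ∀ lam, 0 ≤ y.2 lam := by
      intro lam; rw [h2' lam]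
      refine Finset.sum_nonneg fun κ _ => Finset.sum_nonneg fun i _ =>
        Finset.sum_nonneg fun j _ => mul_nonneg (hc _ _ _ _) (by positivity)
    refine ⟨hy1, hy2, ?_, ?_⟩
    · calc (∑ κ, y.1 κ)
          = ∑ κ : Fin d₁, ∑ i : Fin e₁, ∑ lam : Fin d₂, ∑ j : Fin e₂,
              c κ i lam j * ((i : ℕ) + 1 : ℝ) := Finset.sum_congr rfl fun κ _ => h1' κ
        _ ≤ ∑ κ : Fin d₁, ∑ i : Fin e₁, ∑ lam : Fin d₂, ∑ j : Fin e₂,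
              (e₁ : ℝ) * (c κ i lam j * ((j : ℕ) + 1 : ℝ)) := by
            refine Finset.sum_le_sum fun κ _ => Finset.sum_le_sum fun i _ =>
              Finset.sum_le_sum fun lam _ => Finset.sum_le_sum fun j _ => ?_
            have hi : ((i : ℕ) : ℝ) + 1 ≤ (e₁ : ℝ) := by exact_mod_cast i.isLt
            have hj : (0 : ℝ) ≤ ((j : ℕ) : ℝ) := Nat.cast_nonneg _
            have hcn := hc κ i lam j
            have he : (0 : ℝ) ≤ (e₁ : ℝ) := Nat.cast_nonneg _
            nlinarith [mul_le_mul_of_nonneg_left hi hcn, mul_nonneg (mul_nonneg he hcn) hj]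
        _ = e₁ * (∑ lam, y.2 lam) := by
            simp only [h2', Finset.mul_sum]
            conv_rhs => rw [Finset.sum_comm]
            exact Finset.sum_congr rfl fun κ _ => Finset.sum_comm
    · calc (∑ lam, y.2 lam)
          = ∑ κ : Fin d₁, ∑ i : Fin e₁, ∑ lam : Fin d₂, ∑ j : Fin e₂,
              c κ i lam j * ((j : ℕ) + 1 : ℝ) := by
            rw [show (∑ lam, y.2 lam) = ∑ lam, ∑ κ : Fin d₁, ∑ i : Fin e₁, ∑ j : Fin e₂,
              c κ i lam j * ((j : ℕ) + 1 : ℝ) from Finset.sum_congr rfl fun lam _ => h2' lam]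
            rw [Finset.sum_comm]
            refine Finset.sum_congr rfl fun κ _ => ?_
            rw [Finset.sum_comm]
        _ ≤ ∑ κ : Fin d₁, ∑ i : Fin e₁, ∑ lam : Fin d₂, ∑ j : Fin e₂,
              (e₂ : ℝ) * (c κ i lam j * ((i : ℕ) + 1 : ℝ)) := by
            refine Finset.sum_le_sum fun κ _ => Finset.sum_le_sum fun i _ =>
              Finset.sum_le_sum fun lam _ => Finset.sum_le_sum fun j _ => ?_
            have hj : ((j : ℕ) : ℝ) + 1 ≤ (e₂ : ℝ) := by exact_mod_cast j.isLt
            have hi : (0 : ℝ) ≤ ((i : ℕ) : ℝ) := Nat.cast_nonneg _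
            have hcn := hc κ i lam j
            have he : (0 : ℝ) ≤ (e₂ : ℝ) := Nat.cast_nonneg _
            nlinarith [mul_le_mul_of_nonneg_left hj hcn, mul_nonneg (mul_nonneg he hcn) hi]
        _ = e₂ * (∑ κ, y.1 κ) := by
            simp only [h1', Finset.mul_sum]
  · rintro ⟨hy1, hy2, hS1, hS2⟩
    set S₁ := ∑ κ, y.1 κ with hS₁def
    set S₂ := ∑ lam, y.2 lam with hS₂def
    have hS₁0 : 0 ≤ S₁ := Finset.sum_nonneg fun κ _ => hy1 κ
    have hS₂0 : 0 ≤ S₂ := Finset.sum_nonneg fun lam _ => hy2 lam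
    rcases eq_or_lt_of_le hS₁0 with hz | hS₁pos
    · -- S₁ = 0, hence S₂ = 0 and y = 0
      have hS₂z : S₂ = 0 := le_antisymm (by nlinarith) hS₂0
      have hy1z : ∀ κ, y.1 κ = 0 := fun κ =>
        (Finset.sum_eq_zero_iff_of_nonneg (fun κ _ => hy1 κ)).mp hz.symm κ (Finset.mem_univ κ)
      have hy2z : ∀ lam, y.2 lam = 0 := fun lam =>
        (Finset.sum_eq_zero_iff_of_nonneg (fun lam _ => hy2 lam)).mp hS₂z lam (Finset.mem_univ lam)
      refine ⟨fun _ _ _ _ => 0, fun _ _ _ _ => le_refl 0, fun κ' => ?_, fun lam' => ?_⟩ <;>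
        simp [hy1z, hy2z]
    · have hS₂pos : 0 < S₂ := by nlinarith
      set E : ℝ := (e₁ : ℝ) * (e₂ : ℝ) - 1 with hEdef
      have hE : 0 < E := by
        have h1 : (2 : ℝ) ≤ (e₁ : ℝ) := by exact_mod_cast he₁
        have h2 : (2 : ℝ) ≤ (e₂ : ℝ) := by exact_mod_cast he₂
        nlinarith
      set α : ℝ := ((e₂ : ℝ) / S₂ - 1 / S₁) / E with hαdef
      set β : ℝ := ((e₁ : ℝ) / S₁ - 1 / S₂) / E with hβdef
      have hα : 0 ≤ α := by
        apply div_nonneg _ hE.le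
        rw [sub_nonneg, div_le_div_iff₀ hS₁pos hS₂pos]
        nlinarith
      have hβ : 0 ≤ β := by
        apply div_nonneg _ hE.le
        rw [sub_nonneg, div_le_div_iff₀ hS₂pos hS₁pos]
        nlinarith
      have hkey1 : α * e₁ + β = 1 / S₂ := by
        rw [hαdef, hβdef, hEdef]
        have hE' : (e₁ : ℝ) * e₂ - 1 ≠ 0 := hE.ne'
        field_simp
        ring_nf
        have hX : (-1 + (e₂ : ℝ) * e₁) ≠ 0 := by intro h; apply hE'; linarith
        calc _ = S₁ * ((-1 + (e₂ : ℝ) * e₁) * (-1 + (e₂ : ℝ) * e₁)⁻¹) := by ring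
          _ = S₁ := by rw [mul_inv_cancel₀ hX, mul_one]
      have hkey2 : α + β * e₂ = 1 / S₁ := by
        rw [hαdef, hβdef, hEdef]
        have hE' : (e₁ : ℝ) * e₂ - 1 ≠ 0 := hE.ne'
        field_simp
        ring_nf
        have hX : (-1 + (e₂ : ℝ) * e₁) ≠ 0 := by intro h; apply hE'; linarith
        calc _ = S₂ * ((-1 + (e₂ : ℝ) * e₁) * (-1 + (e₂ : ℝ) * e₁)⁻¹) := by ring
          _ = S₂ := by rw [mul_inv_cancel₀ hX, mul_one]
      refine ⟨fun κ i lam j => y.1 κ * y.2 lam *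
          ((if i = (⟨e₁-1, by omega⟩ : Fin e₁) ∧ j = (⟨0, by omega⟩ : Fin e₂) then α else 0)
            + (if i = (⟨0, by omega⟩ : Fin e₁) ∧ j = (⟨e₂-1, by omega⟩ : Fin e₂) then β else 0)),
        ?_, ?_, ?_⟩
      · intro κ i lam j
        refine mul_nonneg (mul_nonneg (hy1 κ) (hy2 lam)) (add_nonneg ?_ ?_) <;>
          split <;> simp [hα, hβ]
      · intro κ'
        rw [conic_redA]
        have hfac : ∑ i : Fin e₁, ∑ lam : Fin d₂, ∑ j : Fin e₂,
            (y.1 κ' * y.2 lam *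
              ((if i = (⟨e₁-1, by omega⟩ : Fin e₁) ∧ j = (⟨0, by omega⟩ : Fin e₂) then α else 0)
                + (if i = (⟨0, by omega⟩ : Fin e₁) ∧ j = (⟨e₂-1, by omega⟩ : Fin e₂) then β else 0)))
              * ((i : ℕ) + 1 : ℝ)
            = y.1 κ' * S₂ * (α * e₁ + β) := by
          simp only [ite_and, mul_add, add_mul, mul_ite, ite_mul, mul_zero, zero_mul,
            Finset.sum_add_distrib, Finset.sum_ite_irrel, Finset.sum_const_zero,
            Finset.sum_ite_eq', Finset.mem_univ, if_true]
          have h1 : ((e₁ - 1 : ℕ) : ℝ) = (e₁ : ℝ) - 1 := by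
            have : 1 ≤ e₁ := by omega
            push_cast [this]; ring
          rw [h1]
          simp only [← Finset.sum_mul, ← Finset.mul_sum, Nat.cast_zero, ← hS₂def]
          ring
        rw [hfac, hkey1]
        field_simp
      · intro lam'
        rw [conic_redB]
        have hfac : ∑ κ : Fin d₁, ∑ i : Fin e₁, ∑ j : Fin e₂,
            (y.1 κ * y.2 lam' *
              ((if i = (⟨e₁-1, by omega⟩ : Fin e₁) ∧ j = (⟨0, by omega⟩ : Fin e₂) then α else 0)
                + (if i = (⟨0, by omega⟩ : Fin e₁) ∧ j = (⟨e₂-1, by omega⟩ : Fin e₂) then β else 0)))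
              * ((j : ℕ) + 1 : ℝ)
            = S₁ * y.2 lam' * (α + β * e₂) := by
          simp only [ite_and, mul_add, add_mul, mul_ite, ite_mul, mul_zero, zero_mul,
            Finset.sum_add_distrib, Finset.sum_ite_irrel, Finset.sum_const_zero,
            Finset.sum_ite_eq', Finset.mem_univ, if_true]
          have h2 : ((e₂ - 1 : ℕ) : ℝ) = (e₂ : ℝ) - 1 := by
            have : 1 ≤ e₂ := by omega
            push_cast [this]; ring
          rw [h2]
          simp only [← Finset.sum_mul, ← Finset.mul_sum, Nat.cast_zero, ← hS₁def]
          ring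
        rw [hfac, hkey2]
        field_simp
end

section
/- The cone pos(A) for the conic coupling problem has exactly 2·d₁·d₂ extreme rays, spanned by the vectors e_κ ⊕ e₂·e_λ and e₁·e_κ ⊕ e_λ for κ ∈ [d₁], λ ∈ [d₂]. -/
open Set

/-- The cone of a quadruply-indexed conic coupling problem, as the set of
nonnegative combinations of the columns `i·e_κ ⊕ j·e_λ`. -/
def conicCone (d₁ d₂ e₁ e₂ : ℕ) : Set ((Fin d₁ → ℝ) × (Fin d₂ → ℝ)) :=
  {y | ∃ c : Fin d₁ → Fin e₁ → Fin d₂ → Fin e₂ → ℝ,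
        (∀ κ i lam j, 0 ≤ c κ i lam j) ∧
        y = ∑ κ : Fin d₁, ∑ i : Fin e₁, ∑ lam : Fin d₂, ∑ j : Fin e₂,
              c κ i lam j •
                ((fun κ' => (((i : ℕ) + 1 : ℝ) * (if κ = κ' then 1 else 0))),
                 (fun lam' => (((j : ℕ) + 1 : ℝ) * (if lam = lam' then 1 else 0))))}

/-- The nonnegative ray spanned by a vector `v`. -/
def rayOf {V : Type*} [AddCommGroup V] [Module ℝ V] (v : V) : Set V :=
  {w | ∃ t : ℝ, 0 ≤ t ∧ w = t • v}

/-- `R` is an extreme ray of the cone `C`: `R` is the ray of some nonzero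
vector of `C`, and whenever `u + w ∈ R` with `u, w ∈ C`, both `u, w ∈ R`. -/
def IsExtremeRay {V : Type*} [AddCommGroup V] [Module ℝ V]
    (C R : Set V) : Prop :=
  (∃ v : V, v ≠ 0 ∧ v ∈ C ∧ R = rayOf v) ∧
  ∀ u ∈ C, ∀ w ∈ C, u + w ∈ R → u ∈ R ∧ w ∈ R


section Aux
variable {d₁ d₂ e₁ e₂ : ℕ}

/-- abbreviations for the two candidate vectors -/
def cand1 (d₁ d₂ e₂ : ℕ) (κ : Fin d₁) (lam : Fin d₂) : (Fin d₁ → ℝ) × (Fin d₂ → ℝ) :=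
  ((fun κ' => if κ = κ' then (1 : ℝ) else 0),
   (fun lam' => if lam = lam' then (e₂ : ℝ) else 0))

def cand2 (d₁ d₂ e₁ : ℕ) (κ : Fin d₁) (lam : Fin d₂) : (Fin d₁ → ℝ) × (Fin d₂ → ℝ) :=
  ((fun κ' => if κ = κ' then (e₁ : ℝ) else 0),
   (fun lam' => if lam = lam' then (1 : ℝ) else 0))

lemma mem_rayOf_self {V : Type*} [AddCommGroup V] [Module ℝ V] (v : V) : v ∈ rayOf v :=
  ⟨1, zero_le_one, (one_smul ℝ v).symm⟩

lemma rayOf_smul {V : Type*} [AddCommGroup V] [Module ℝ V] {t : ℝ} (ht : 0 < t) (v : V) :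
    rayOf (t • v) = rayOf v := by
  ext w
  constructor
  · rintro ⟨s, hs, rfl⟩
    exact ⟨s * t, by positivity, by rw [smul_smul]⟩
  · rintro ⟨s, hs, rfl⟩
    exact ⟨s / t, by positivity, by rw [smul_smul, div_mul_cancel₀ _ ht.ne']⟩

lemma rayOf_eq_imp {V : Type*} [AddCommGroup V] [Module ℝ V] {v w : V} (hv : v ≠ 0)
    (h : rayOf v = rayOf w) : ∃ t : ℝ, 0 < t ∧ v = t • w := by
  have hvw : v ∈ rayOf w := h ▸ mem_rayOf_self v
  obtain ⟨t, ht, rfl⟩ := hvw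
  refine ⟨t, ht.lt_of_ne ?_, rfl⟩
  rintro rfl
  simp at hv

/-- membership of a general generator -/
lemma gen_mem (κ : Fin d₁) (i : Fin e₁) (lam : Fin d₂) (j : Fin e₂) :
    ((fun κ' => (((i : ℕ) + 1 : ℝ) * (if κ = κ' then 1 else 0))),
     (fun lam' => (((j : ℕ) + 1 : ℝ) * (if lam = lam' then 1 else 0))))
      ∈ conicCone d₁ d₂ e₁ e₂ := by
  refine ⟨fun a b c d => if a = κ ∧ b = i ∧ c = lam ∧ d = j then 1 else 0,
    fun a b c d => by positivity, ?_⟩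
  simp only [ite_and, ite_smul, one_smul, zero_smul]
  rw [Finset.sum_eq_single κ, Finset.sum_eq_single i, Finset.sum_eq_single lam,
    Finset.sum_eq_single j] <;> simp +contextual

lemma smul_mem_cone {v : (Fin d₁ → ℝ) × (Fin d₂ → ℝ)} (hv : v ∈ conicCone d₁ d₂ e₁ e₂)
    {t : ℝ} (ht : 0 ≤ t) : t • v ∈ conicCone d₁ d₂ e₁ e₂ := by
  obtain ⟨c, hc, rfl⟩ := hv
  refine ⟨fun a b c' d => t * c a b c' d, fun a b c' d => mul_nonneg ht (hc a b c' d), ?_⟩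
  simp [Finset.smul_sum, smul_smul]

lemma add_mem_cone {v w : (Fin d₁ → ℝ) × (Fin d₂ → ℝ)} (hv : v ∈ conicCone d₁ d₂ e₁ e₂)
    (hw : w ∈ conicCone d₁ d₂ e₁ e₂) : v + w ∈ conicCone d₁ d₂ e₁ e₂ := by
  obtain ⟨c, hc, rfl⟩ := hv
  obtain ⟨c', hc', rfl⟩ := hw
  refine ⟨fun a b e d => c a b e d + c' a b e d,
    fun a b e d => add_nonneg (hc a b e d) (hc' a b e d), ?_⟩
  simp [add_smul, Prod.mk_add_mk, ← Finset.sum_add_distrib]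

lemma zero_mem_cone : (0 : (Fin d₁ → ℝ) × (Fin d₂ → ℝ)) ∈ conicCone d₁ d₂ e₁ e₂ :=
  ⟨0, fun _ _ _ _ => le_refl 0, by simp⟩

end Aux
section Aux2
variable {d₁ d₂ e₁ e₂ : ℕ}

lemma cand1_mem (he₂ : 1 ≤ e₂) (he₁ : 1 ≤ e₁) (κ : Fin d₁) (lam : Fin d₂) :
    cand1 d₁ d₂ e₂ κ lam ∈ conicCone d₁ d₂ e₁ e₂ := by
  have h := gen_mem (e₁ := e₁) (e₂ := e₂) κ ⟨0, by omega⟩ lam ⟨e₂ - 1, by omega⟩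
  convert h using 2
  · funext κ'
    simp [cand1]
  · funext lam'
    simp only [cand1]
    have : ((e₂ - 1 : ℕ) : ℝ) + 1 = (e₂ : ℝ) := by
      have : e₂ - 1 + 1 = e₂ := by omega
      exact_mod_cast congrArg (Nat.cast : ℕ → ℝ) this
    rw [this]
    simp [mul_ite]

lemma cand2_mem (he₂ : 1 ≤ e₂) (he₁ : 1 ≤ e₁) (κ : Fin d₁) (lam : Fin d₂) :
    cand2 d₁ d₂ e₁ κ lam ∈ conicCone d₁ d₂ e₁ e₂ := by
  have h := gen_mem (e₁ := e₁) (e₂ := e₂) κ ⟨e₁ - 1, by omega⟩ lam ⟨0, by omega⟩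
  convert h using 2
  · funext κ'
    simp only [cand2]
    have : ((e₁ - 1 : ℕ) : ℝ) + 1 = (e₁ : ℝ) := by
      have : e₁ - 1 + 1 = e₁ := by omega
      exact_mod_cast congrArg (Nat.cast : ℕ → ℝ) this
    rw [this]
    simp [mul_ite]
  · funext lam'
    simp [cand2]

lemma cone_coords {c : Fin d₁ → Fin e₁ → Fin d₂ → Fin e₂ → ℝ} :
    (∀ κ' : Fin d₁, (∑ κ : Fin d₁, ∑ i : Fin e₁, ∑ lam : Fin d₂, ∑ j : Fin e₂,
              c κ i lam j •
                ((fun κ' => (((i : ℕ) + 1 : ℝ) * (if κ = κ' then 1 else 0))),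
                 (fun lam' => (((j : ℕ) + 1 : ℝ) * (if lam = lam' then 1 else 0))))).1 κ'
      = ∑ i : Fin e₁, ∑ lam : Fin d₂, ∑ j : Fin e₂, c κ' i lam j * ((i : ℕ) + 1)) ∧
    (∀ lam' : Fin d₂, (∑ κ : Fin d₁, ∑ i : Fin e₁, ∑ lam : Fin d₂, ∑ j : Fin e₂,
              c κ i lam j •
                ((fun κ' => (((i : ℕ) + 1 : ℝ) * (if κ = κ' then 1 else 0))),
                 (fun lam' => (((j : ℕ) + 1 : ℝ) * (if lam = lam' then 1 else 0))))).2 lam'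
      = ∑ κ : Fin d₁, ∑ i : Fin e₁, ∑ j : Fin e₂, c κ i lam' j * ((j : ℕ) + 1)) := by
  constructor
  · intro κ'
    simp [Prod.fst_sum, Finset.sum_apply, mul_ite, mul_one, mul_zero,
      Finset.sum_ite_irrel, Finset.sum_ite_eq', mul_comm]
  · intro lam'
    simp [Prod.snd_sum, Finset.sum_apply, mul_ite, mul_one, mul_zero,
      Finset.sum_ite_irrel, Finset.sum_ite_eq', mul_comm]

end Aux2
section Aux3
variable {d₁ d₂ e₁ e₂ : ℕ}

lemma cone_sub_H {v : (Fin d₁ → ℝ) × (Fin d₂ → ℝ)} (hv : v ∈ conicCone d₁ d₂ e₁ e₂) :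
    (∀ κ, 0 ≤ v.1 κ) ∧ (∀ l, 0 ≤ v.2 l) ∧
    (∑ l, v.2 l) ≤ e₂ * ∑ κ, v.1 κ ∧ (∑ κ, v.1 κ) ≤ e₁ * ∑ l, v.2 l := by
  obtain ⟨c, hc, rfl⟩ := hv
  obtain ⟨h1, h2⟩ := cone_coords (c := c)
  refine ⟨?_, ?_, ?_, ?_⟩
  · intro κ'
    rw [h1 κ']
    apply Finset.sum_nonneg; intro i _
    apply Finset.sum_nonneg; intro lam _
    apply Finset.sum_nonneg; intro j _
    have := hc κ' i lam j
    positivity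
  · intro lam'
    rw [h2 lam']
    apply Finset.sum_nonneg; intro κ _
    apply Finset.sum_nonneg; intro i _
    apply Finset.sum_nonneg; intro j _
    have := hc κ i lam' j
    positivity
  · calc (∑ l, (∑ κ : Fin d₁, ∑ i : Fin e₁, ∑ lam : Fin d₂, ∑ j : Fin e₂,
              c κ i lam j •
                ((fun κ' => (((i : ℕ) + 1 : ℝ) * (if κ = κ' then 1 else 0))),
                 (fun lam' => (((j : ℕ) + 1 : ℝ) * (if lam = lam' then 1 else 0))))).2 l)
        = ∑ l : Fin d₂, ∑ κ : Fin d₁, ∑ i : Fin e₁, ∑ j : Fin e₂, c κ i l j * ((j : ℕ) + 1) := by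
          exact Finset.sum_congr rfl fun l _ => h2 l
      _ ≤ ∑ l : Fin d₂, ∑ κ : Fin d₁, ∑ i : Fin e₁, ∑ j : Fin e₂,
            (e₂ : ℝ) * (c κ i l j * ((i : ℕ) + 1)) := by
          refine Finset.sum_le_sum fun l _ => Finset.sum_le_sum fun κ _ =>
            Finset.sum_le_sum fun i _ => Finset.sum_le_sum fun j _ => ?_
          have hj : ((j : ℕ) : ℝ) + 1 ≤ (e₂ : ℝ) := by exact_mod_cast j.isLt
          have hi : (1 : ℝ) ≤ ((i : ℕ) : ℝ) + 1 := by
            have : (0:ℝ) ≤ ((i : ℕ) : ℝ) := Nat.cast_nonneg _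
            linarith
          have hcn := hc κ i l j
          calc c κ i l j * (((j:ℕ):ℝ) + 1) ≤ c κ i l j * (e₂ : ℝ) :=
                mul_le_mul_of_nonneg_left hj hcn
            _ ≤ (c κ i l j * (((i:ℕ):ℝ) + 1)) * (e₂ : ℝ) :=
                mul_le_mul_of_nonneg_right (le_mul_of_one_le_right hcn hi) (Nat.cast_nonneg _)
            _ = (e₂ : ℝ) * (c κ i l j * (((i:ℕ):ℝ) + 1)) := by ring
      _ = (e₂ : ℝ) * ∑ κ, (∑ κ : Fin d₁, ∑ i : Fin e₁, ∑ lam : Fin d₂, ∑ j : Fin e₂,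
              c κ i lam j •
                ((fun κ' => (((i : ℕ) + 1 : ℝ) * (if κ = κ' then 1 else 0))),
                 (fun lam' => (((j : ℕ) + 1 : ℝ) * (if lam = lam' then 1 else 0))))).1 κ := by
          rw [Finset.mul_sum]
          rw [show (∑ κ', (e₂ : ℝ) * (∑ κ : Fin d₁, ∑ i : Fin e₁, ∑ lam : Fin d₂, ∑ j : Fin e₂,
              c κ i lam j •
                ((fun κ' => (((i : ℕ) + 1 : ℝ) * (if κ = κ' then 1 else 0))),
                 (fun lam' => (((j : ℕ) + 1 : ℝ) * (if lam = lam' then 1 else 0))))).1 κ')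
            = ∑ κ' : Fin d₁, (e₂ : ℝ) * ∑ i : Fin e₁, ∑ lam : Fin d₂, ∑ j : Fin e₂,
                c κ' i lam j * ((i : ℕ) + 1) from
            Finset.sum_congr rfl fun κ' _ => by rw [h1 κ']]
          simp_rw [Finset.mul_sum]
          rw [Finset.sum_comm]
          exact Finset.sum_congr rfl fun _ _ => Finset.sum_comm
  · calc (∑ κ, (∑ κ : Fin d₁, ∑ i : Fin e₁, ∑ lam : Fin d₂, ∑ j : Fin e₂,
              c κ i lam j •
                ((fun κ' => (((i : ℕ) + 1 : ℝ) * (if κ = κ' then 1 else 0))),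
                 (fun lam' => (((j : ℕ) + 1 : ℝ) * (if lam = lam' then 1 else 0))))).1 κ)
        = ∑ κ : Fin d₁, ∑ i : Fin e₁, ∑ lam : Fin d₂, ∑ j : Fin e₂, c κ i lam j * ((i : ℕ) + 1) := by
          exact Finset.sum_congr rfl fun κ _ => h1 κ
      _ ≤ ∑ κ : Fin d₁, ∑ i : Fin e₁, ∑ lam : Fin d₂, ∑ j : Fin e₂,
            (e₁ : ℝ) * (c κ i lam j * ((j : ℕ) + 1)) := by
          refine Finset.sum_le_sum fun κ _ => Finset.sum_le_sum fun i _ =>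
            Finset.sum_le_sum fun lam _ => Finset.sum_le_sum fun j _ => ?_
          have hi : ((i : ℕ) : ℝ) + 1 ≤ (e₁ : ℝ) := by exact_mod_cast i.isLt
          have hj : (1 : ℝ) ≤ ((j : ℕ) : ℝ) + 1 := by
            have : (0:ℝ) ≤ ((j : ℕ) : ℝ) := Nat.cast_nonneg _
            linarith
          have hcn := hc κ i lam j
          calc c κ i lam j * (((i:ℕ):ℝ) + 1) ≤ c κ i lam j * (e₁ : ℝ) :=
                mul_le_mul_of_nonneg_left hi hcn
            _ ≤ (c κ i lam j * (((j:ℕ):ℝ) + 1)) * (e₁ : ℝ) :=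
                mul_le_mul_of_nonneg_right (le_mul_of_one_le_right hcn hj) (Nat.cast_nonneg _)
            _ = (e₁ : ℝ) * (c κ i lam j * (((j:ℕ):ℝ) + 1)) := by ring
      _ = (e₁ : ℝ) * ∑ l, (∑ κ : Fin d₁, ∑ i : Fin e₁, ∑ lam : Fin d₂, ∑ j : Fin e₂,
              c κ i lam j •
                ((fun κ' => (((i : ℕ) + 1 : ℝ) * (if κ = κ' then 1 else 0))),
                 (fun lam' => (((j : ℕ) + 1 : ℝ) * (if lam = lam' then 1 else 0))))).2 l := by
          rw [Finset.mul_sum]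
          rw [show (∑ l, (e₁ : ℝ) * (∑ κ : Fin d₁, ∑ i : Fin e₁, ∑ lam : Fin d₂, ∑ j : Fin e₂,
              c κ i lam j •
                ((fun κ' => (((i : ℕ) + 1 : ℝ) * (if κ = κ' then 1 else 0))),
                 (fun lam' => (((j : ℕ) + 1 : ℝ) * (if lam = lam' then 1 else 0))))).2 l)
            = ∑ l : Fin d₂, (e₁ : ℝ) * ∑ κ : Fin d₁, ∑ i : Fin e₁, ∑ j : Fin e₂,
                c κ i l j * ((j : ℕ) + 1) from
            Finset.sum_congr rfl fun l _ => by rw [h2 l]]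
          simp_rw [Finset.mul_sum]
          conv_rhs => rw [Finset.sum_comm]
          exact Finset.sum_congr rfl fun _ _ => Finset.sum_comm

end Aux3
section Aux4
variable {d₁ d₂ e₁ e₂ : ℕ}

lemma decomp (x : Fin d₁ → ℝ) (y : Fin d₂ → ℝ) (A B : ℝ)
    (hA : (A + e₁ * B) * (∑ l, y l) = 1) (hB : ((e₂ : ℝ) * A + B) * (∑ κ, x κ) = 1) :
    ((x, y) : (Fin d₁ → ℝ) × (Fin d₂ → ℝ)) = ∑ p : Fin d₁ × Fin d₂ × Bool,
      (if p.2.2 then ((A * x p.1 * y p.2.1) • cand1 d₁ d₂ e₂ p.1 p.2.1)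
       else ((B * x p.1 * y p.2.1) • cand2 d₁ d₂ e₁ p.1 p.2.1)) := by
  refine Prod.ext (funext fun κ' => ?_) (funext fun lam' => ?_)
  · simp only [Fintype.sum_prod_type, Fintype.sum_bool, if_true, if_false,
      Bool.false_eq_true, Prod.fst_sum, Finset.sum_apply, cand1, cand2, Prod.smul_fst,
      Pi.smul_apply, smul_eq_mul, mul_ite, mul_one, mul_zero, Prod.fst_add, Pi.add_apply,
      Finset.sum_ite_eq', Finset.mem_univ, if_true, ite_add_ite]
    rw [Finset.sum_comm]
    simp only [add_zero, Finset.sum_ite_eq', Finset.mem_univ, if_true]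
    rw [show ∑ x_2 : Fin d₂, (A * x κ' * y x_2 + B * x κ' * y x_2 * (e₁ : ℝ))
        = ((A + (e₁:ℝ) * B) * x κ') * ∑ l, y l from by
      rw [Finset.mul_sum]; exact Finset.sum_congr rfl fun _ _ => by ring]
    linear_combination (-(x κ')) * hA
  · simp only [Fintype.sum_prod_type, Fintype.sum_bool, if_true, if_false,
      Bool.false_eq_true, Prod.snd_sum, Finset.sum_apply, cand1, cand2, Prod.smul_snd,
      Pi.smul_apply, smul_eq_mul, mul_ite, mul_one, mul_zero, Prod.snd_add, Pi.add_apply,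
      Finset.sum_ite_eq', Finset.mem_univ, if_true, ite_add_ite]
    simp only [add_zero, Finset.sum_ite_eq', Finset.mem_univ, if_true]
    rw [show ∑ x_1 : Fin d₁, (A * x x_1 * y lam' * (e₂ : ℝ) + B * x x_1 * y lam')
        = (((e₂:ℝ) * A + B) * y lam') * ∑ κ, x κ from by
      rw [Finset.mul_sum]; exact Finset.sum_congr rfl fun _ _ => by ring]
    linear_combination (-(y lam')) * hB
end Aux4
section Aux5
variable {d₁ d₂ e₁ e₂ : ℕ}

lemma sum_mem_cone {ι : Type*} (s : Finset ι) (f : ι → (Fin d₁ → ℝ) × (Fin d₂ → ℝ))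
    (hf : ∀ i ∈ s, f i ∈ conicCone d₁ d₂ e₁ e₂) :
    (∑ i ∈ s, f i) ∈ conicCone d₁ d₂ e₁ e₂ :=
  Finset.sum_induction f (· ∈ conicCone d₁ d₂ e₁ e₂)
    (fun _ _ ha hb => add_mem_cone ha hb) zero_mem_cone hf

lemma sum_mem_ray {ι : Type*} [DecidableEq ι] (R : Set ((Fin d₁ → ℝ) × (Fin d₂ → ℝ)))
    (hext : ∀ u ∈ conicCone d₁ d₂ e₁ e₂, ∀ w ∈ conicCone d₁ d₂ e₁ e₂, u + w ∈ R → u ∈ R ∧ w ∈ R) :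
    ∀ (s : Finset ι) (f : ι → (Fin d₁ → ℝ) × (Fin d₂ → ℝ)),
      (∀ i ∈ s, f i ∈ conicCone d₁ d₂ e₁ e₂) → (∑ i ∈ s, f i) ∈ R → ∀ i ∈ s, f i ∈ R := by
  intro s
  induction s using Finset.induction_on with
  | empty => intro f _ _ i hi; simp at hi
  | @insert a s' hnot ih =>
    intro f hf hs i hi
    rw [Finset.sum_insert hnot] at hs
    obtain ⟨hfa, hrest⟩ := hext _ (hf a (Finset.mem_insert_self a s'))
      _ (sum_mem_cone s' f fun j hj => hf j (Finset.mem_insert_of_mem hj)) hs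
    rcases Finset.mem_insert.mp hi with rfl | h
    · exact hfa
    · exact ih f (fun j hj => hf j (Finset.mem_insert_of_mem hj)) hrest i h

end Aux5
section Aux6
variable {d₁ d₂ e₁ e₂ : ℕ}

lemma cand1_ne_zero (κ : Fin d₁) (lam : Fin d₂) : cand1 d₁ d₂ e₂ κ lam ≠ 0 := by
  intro h
  have := congrFun (congrArg Prod.fst h) κ
  simp [cand1] at this

lemma cand2_ne_zero (κ : Fin d₁) (lam : Fin d₂) : cand2 d₁ d₂ e₁ κ lam ≠ 0 := by
  intro h
  have := congrFun (congrArg Prod.snd h) lam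
  simp [cand2] at this

lemma cand1_extreme (he₁ : 1 ≤ e₁) (he₂ : 1 ≤ e₂) (κ : Fin d₁) (lam : Fin d₂) :
    IsExtremeRay (conicCone d₁ d₂ e₁ e₂) (rayOf (cand1 d₁ d₂ e₂ κ lam)) := by
  refine ⟨⟨cand1 d₁ d₂ e₂ κ lam, cand1_ne_zero κ lam, cand1_mem he₂ he₁ κ lam, rfl⟩, ?_⟩
  rintro u hu w hw ⟨t, ht, huw⟩
  obtain ⟨hu1, hu2, hu3, hu4⟩ := cone_sub_H hu
  obtain ⟨hw1, hw2, hw3, hw4⟩ := cone_sub_H hw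
  have h1 : ∀ κ'' : Fin d₁, u.1 κ'' + w.1 κ'' = t * (if κ = κ'' then 1 else 0) := by
    intro κ''
    have := congrFun (congrArg Prod.fst huw) κ''
    simpa [cand1] using this
  have h2 : ∀ lam'' : Fin d₂, u.2 lam'' + w.2 lam'' = t * (if lam = lam'' then (e₂ : ℝ) else 0) := by
    intro lam''
    have := congrFun (congrArg Prod.snd huw) lam''
    simpa [cand2, cand1] using this
  have hz1 : ∀ κ'' : Fin d₁, κ ≠ κ'' → u.1 κ'' = 0 ∧ w.1 κ'' = 0 := by
    intro κ'' hne
    have := h1 κ''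
    rw [if_neg hne, mul_zero] at this
    constructor <;> linarith [hu1 κ'', hw1 κ'']
  have hz2 : ∀ lam'' : Fin d₂, lam ≠ lam'' → u.2 lam'' = 0 ∧ w.2 lam'' = 0 := by
    intro lam'' hne
    have := h2 lam''
    rw [if_neg hne, mul_zero] at this
    constructor <;> linarith [hu2 lam'', hw2 lam'']
  have hsu1 : ∑ κ'', u.1 κ'' = u.1 κ :=
    Finset.sum_eq_single κ (fun b _ hb => (hz1 b (Ne.symm hb)).1) (by simp)
  have hsu2 : ∑ lam'', u.2 lam'' = u.2 lam :=
    Finset.sum_eq_single lam (fun b _ hb => (hz2 b (Ne.symm hb)).1) (by simp)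
  have hsw1 : ∑ κ'', w.1 κ'' = w.1 κ :=
    Finset.sum_eq_single κ (fun b _ hb => (hz1 b (Ne.symm hb)).2) (by simp)
  have hsw2 : ∑ lam'', w.2 lam'' = w.2 lam :=
    Finset.sum_eq_single lam (fun b _ hb => (hz2 b (Ne.symm hb)).2) (by simp)
  rw [hsu1, hsu2] at hu3
  rw [hsw1, hsw2] at hw3
  have heq1 : u.1 κ + w.1 κ = t := by have := h1 κ; simpa using this
  have heq2 : u.2 lam + w.2 lam = t * e₂ := by have := h2 lam; simpa using this
  have key : u.2 lam + w.2 lam = e₂ * (u.1 κ + w.1 κ) := by rw [heq1, heq2]; ring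
  have hueq : u.2 lam = e₂ * u.1 κ := by linarith
  have hweq : w.2 lam = e₂ * w.1 κ := by linarith
  constructor
  · refine ⟨u.1 κ, hu1 κ, ?_⟩
    refine Prod.ext (funext fun κ'' => ?_) (funext fun lam'' => ?_)
    · simp only [cand1, Prod.smul_fst, Pi.smul_apply, smul_eq_mul, mul_ite, mul_one, mul_zero]
      by_cases h : κ = κ''
      · subst h; simp
      · simp [h, (hz1 κ'' h).1]
    · simp only [cand1, Prod.smul_snd, Pi.smul_apply, smul_eq_mul, mul_ite, mul_zero]
      by_cases h : lam = lam''
      · subst h; simp [hueq, mul_comm]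
      · simp [h, (hz2 lam'' h).1]
  · refine ⟨w.1 κ, hw1 κ, ?_⟩
    refine Prod.ext (funext fun κ'' => ?_) (funext fun lam'' => ?_)
    · simp only [cand1, Prod.smul_fst, Pi.smul_apply, smul_eq_mul, mul_ite, mul_one, mul_zero]
      by_cases h : κ = κ''
      · subst h; simp
      · simp [h, (hz1 κ'' h).2]
    · simp only [cand1, Prod.smul_snd, Pi.smul_apply, smul_eq_mul, mul_ite, mul_zero]
      by_cases h : lam = lam''
      · subst h; simp [hweq, mul_comm]
      · simp [h, (hz2 lam'' h).2]

lemma cand2_extreme (he₁ : 1 ≤ e₁) (he₂ : 1 ≤ e₂) (κ : Fin d₁) (lam : Fin d₂) :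
    IsExtremeRay (conicCone d₁ d₂ e₁ e₂) (rayOf (cand2 d₁ d₂ e₁ κ lam)) := by
  refine ⟨⟨cand2 d₁ d₂ e₁ κ lam, cand2_ne_zero κ lam, cand2_mem he₂ he₁ κ lam, rfl⟩, ?_⟩
  rintro u hu w hw ⟨t, ht, huw⟩
  obtain ⟨hu1, hu2, hu3, hu4⟩ := cone_sub_H hu
  obtain ⟨hw1, hw2, hw3, hw4⟩ := cone_sub_H hw
  have h1 : ∀ κ'' : Fin d₁, u.1 κ'' + w.1 κ'' = t * (if κ = κ'' then (e₁ : ℝ) else 0) := by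
    intro κ''
    have := congrFun (congrArg Prod.fst huw) κ''
    simpa [cand2] using this
  have h2 : ∀ lam'' : Fin d₂, u.2 lam'' + w.2 lam'' = t * (if lam = lam'' then 1 else 0) := by
    intro lam''
    have := congrFun (congrArg Prod.snd huw) lam''
    simpa [cand2] using this
  have hz1 : ∀ κ'' : Fin d₁, κ ≠ κ'' → u.1 κ'' = 0 ∧ w.1 κ'' = 0 := by
    intro κ'' hne
    have := h1 κ''
    rw [if_neg hne, mul_zero] at this
    constructor <;> linarith [hu1 κ'', hw1 κ'']
  have hz2 : ∀ lam'' : Fin d₂, lam ≠ lam'' → u.2 lam'' = 0 ∧ w.2 lam'' = 0 := by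
    intro lam'' hne
    have := h2 lam''
    rw [if_neg hne, mul_zero] at this
    constructor <;> linarith [hu2 lam'', hw2 lam'']
  have hsu1 : ∑ κ'', u.1 κ'' = u.1 κ :=
    Finset.sum_eq_single κ (fun b _ hb => (hz1 b (Ne.symm hb)).1) (by simp)
  have hsu2 : ∑ lam'', u.2 lam'' = u.2 lam :=
    Finset.sum_eq_single lam (fun b _ hb => (hz2 b (Ne.symm hb)).1) (by simp)
  have hsw1 : ∑ κ'', w.1 κ'' = w.1 κ :=
    Finset.sum_eq_single κ (fun b _ hb => (hz1 b (Ne.symm hb)).2) (by simp)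
  have hsw2 : ∑ lam'', w.2 lam'' = w.2 lam :=
    Finset.sum_eq_single lam (fun b _ hb => (hz2 b (Ne.symm hb)).2) (by simp)
  rw [hsu1, hsu2] at hu4
  rw [hsw1, hsw2] at hw4
  have heq1 : u.1 κ + w.1 κ = t * e₁ := by have := h1 κ; simpa using this
  have heq2 : u.2 lam + w.2 lam = t := by have := h2 lam; simpa using this
  have key : u.1 κ + w.1 κ = e₁ * (u.2 lam + w.2 lam) := by rw [heq1, heq2]; ring
  have hueq : u.1 κ = e₁ * u.2 lam := by linarith
  have hweq : w.1 κ = e₁ * w.2 lam := by linarith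
  constructor
  · refine ⟨u.2 lam, hu2 lam, ?_⟩
    refine Prod.ext (funext fun κ'' => ?_) (funext fun lam'' => ?_)
    · simp only [cand2, Prod.smul_fst, Pi.smul_apply, smul_eq_mul, mul_ite, mul_zero]
      by_cases h : κ = κ''
      · subst h; simp [hueq, mul_comm]
      · simp [h, (hz1 κ'' h).1]
    · simp only [cand2, Prod.smul_snd, Pi.smul_apply, smul_eq_mul, mul_ite, mul_one, mul_zero]
      by_cases h : lam = lam''
      · subst h; simp
      · simp [h, (hz2 lam'' h).1]
  · refine ⟨w.2 lam, hw2 lam, ?_⟩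
    refine Prod.ext (funext fun κ'' => ?_) (funext fun lam'' => ?_)
    · simp only [cand2, Prod.smul_fst, Pi.smul_apply, smul_eq_mul, mul_ite, mul_zero]
      by_cases h : κ = κ''
      · subst h; simp [hweq, mul_comm]
      · simp [h, (hz1 κ'' h).2]
    · simp only [cand2, Prod.smul_snd, Pi.smul_apply, smul_eq_mul, mul_ite, mul_one, mul_zero]
      by_cases h : lam = lam''
      · subst h; simp
      · simp [h, (hz2 lam'' h).2]

end Aux6
section Aux7
variable {d₁ d₂ e₁ e₂ : ℕ}

lemma ray_reduce {V : Type*} [AddCommGroup V] [Module ℝ V] {v w : V} {c : ℝ} (hc : 0 ≤ c)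
    (hmem : c • w ∈ rayOf v) (hne : c • w ≠ 0) : rayOf v = rayOf w := by
  obtain ⟨t, ht, heq⟩ := hmem
  have ht' : 0 < t := ht.lt_of_ne (by rintro rfl; rw [zero_smul] at heq; exact hne heq)
  have hc' : 0 < c := hc.lt_of_ne (by rintro rfl; simp at hne)
  have hv : v = (t⁻¹ * c) • w := by
    have := congrArg (fun z => t⁻¹ • z) heq
    simpa [smul_smul, inv_mul_cancel₀ ht'.ne'] using this.symm
  rw [hv, rayOf_smul (by positivity)]

lemma extreme_forward (he₁ : 2 ≤ e₁) (he₂ : 2 ≤ e₂)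
    {R : Set ((Fin d₁ → ℝ) × (Fin d₂ → ℝ))}
    (h : IsExtremeRay (conicCone d₁ d₂ e₁ e₂) R) :
    ∃ (κ : Fin d₁) (lam : Fin d₂),
      R = rayOf (cand1 d₁ d₂ e₂ κ lam) ∨ R = rayOf (cand2 d₁ d₂ e₁ κ lam) := by
  obtain ⟨⟨v, hv0, hvC, rfl⟩, hext⟩ := h
  obtain ⟨hx, hy, h3, h4⟩ := cone_sub_H hvC
  have he₁' : (2 : ℝ) ≤ (e₁ : ℝ) := by exact_mod_cast he₁
  have he₂' : (2 : ℝ) ≤ (e₂ : ℝ) := by exact_mod_cast he₂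
  have hX0 : 0 ≤ ∑ κ, v.1 κ := Finset.sum_nonneg fun i _ => hx i
  have hY0 : 0 ≤ ∑ l, v.2 l := Finset.sum_nonneg fun i _ => hy i
  have hXpos : 0 < ∑ κ, v.1 κ := by
    rcases hX0.lt_or_eq with h | h
    · exact h
    · exfalso
      apply hv0
      have hYz : ∑ l, v.2 l = 0 := le_antisymm (by rw [← h] at h3; linarith) hY0
      have h1 := (Finset.sum_eq_zero_iff_of_nonneg (fun i _ => hx i)).1 h.symm
      have h2 := (Finset.sum_eq_zero_iff_of_nonneg (fun i _ => hy i)).1 hYz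
      exact Prod.ext (funext fun i => h1 i (Finset.mem_univ i))
        (funext fun i => h2 i (Finset.mem_univ i))
  have hYpos : 0 < ∑ l, v.2 l := by
    rcases hY0.lt_or_eq with h | h
    · exact h
    · exfalso; rw [← h] at h4; linarith
  have hden : (0 : ℝ) < (e₁ : ℝ) * e₂ - 1 := by nlinarith
  set X := ∑ κ, v.1 κ with hXdef
  set Y := ∑ l, v.2 l with hYdef
  set A : ℝ := ((e₁ : ℝ) * Y - X) / (((e₁ : ℝ) * e₂ - 1) * (X * Y)) with hAdef
  set B : ℝ := ((e₂ : ℝ) * X - Y) / (((e₁ : ℝ) * e₂ - 1) * (X * Y)) with hBdef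
  have hA0 : 0 ≤ A := div_nonneg (by linarith) (by positivity)
  have hB0 : 0 ≤ B := div_nonneg (by linarith) (by positivity)
  have hAeq : (A + e₁ * B) * Y = 1 := by
    rw [hAdef, hBdef]
    field_simp
    ring
  have hBeq : ((e₂ : ℝ) * A + B) * X = 1 := by
    rw [hAdef, hBdef]
    field_simp
    ring
    have hd2 : (-1 + (e₂ : ℝ) * e₁) ≠ 0 := by intro h; nlinarith
    field_simp
    ring
  have hdecomp := decomp v.1 v.2 A B hAeq hBeq
  rw [Prod.mk.eta] at hdecomp
  set f : Fin d₁ × Fin d₂ × Bool → (Fin d₁ → ℝ) × (Fin d₂ → ℝ) := fun p =>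
    if p.2.2 then ((A * v.1 p.1 * v.2 p.2.1) • cand1 d₁ d₂ e₂ p.1 p.2.1)
    else ((B * v.1 p.1 * v.2 p.2.1) • cand2 d₁ d₂ e₁ p.1 p.2.1) with hfdef
  have hfC : ∀ p ∈ Finset.univ, f p ∈ conicCone d₁ d₂ e₁ e₂ := by
    rintro ⟨κ, lam, b⟩ _
    cases b
    · exact smul_mem_cone (cand2_mem (by omega) (by omega) κ lam)
        (by have := hx κ; have := hy lam; positivity)
    · exact smul_mem_cone (cand1_mem (by omega) (by omega) κ lam)
        (by have := hx κ; have := hy lam; positivity)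
  have hall := sum_mem_ray (rayOf v) hext Finset.univ f hfC
    (by rw [← hdecomp]; exact mem_rayOf_self v)
  have hne : ∃ p, f p ≠ 0 := by
    by_contra hc
    push_neg at hc
    exact hv0 (by rw [hdecomp]; exact Finset.sum_eq_zero fun p _ => hc p)
  obtain ⟨⟨κ, lam, b⟩, hp⟩ := hne
  have hpR := hall _ (Finset.mem_univ (κ, lam, b))
  refine ⟨κ, lam, ?_⟩
  cases b
  · right
    simp only [hfdef] at hp hpR
    exact ray_reduce (by have := hx κ; have := hy lam; positivity) hpR hp
  · left
    simp only [hfdef] at hp hpR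
    exact ray_reduce (by have := hx κ; have := hy lam; positivity) hpR hp

lemma ray11 (he₂ : 2 ≤ e₂) {κ κ' : Fin d₁} {lam lam' : Fin d₂}
    (h : rayOf (cand1 d₁ d₂ e₂ κ lam) = rayOf (cand1 d₁ d₂ e₂ κ' lam')) :
    κ = κ' ∧ lam = lam' := by
  obtain ⟨t, ht, heq⟩ := rayOf_eq_imp (cand1_ne_zero κ lam) h
  have h1 := congrFun (congrArg Prod.fst heq) κ
  have h2 := congrFun (congrArg Prod.snd heq) lam
  simp only [cand1, Prod.smul_fst, Prod.smul_snd, Pi.smul_apply, smul_eq_mul] at h1 h2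
  constructor
  · by_contra hk
    have hne : ¬ (κ' = κ) := fun hh => hk hh.symm
    simp [hne] at h1
  · by_contra hk
    have hne : ¬ (lam' = lam) := fun hh => hk hh.symm
    simp [hne] at h2
    omega

lemma ray22 (he₁ : 2 ≤ e₁) {κ κ' : Fin d₁} {lam lam' : Fin d₂}
    (h : rayOf (cand2 d₁ d₂ e₁ κ lam) = rayOf (cand2 d₁ d₂ e₁ κ' lam')) :
    κ = κ' ∧ lam = lam' := by
  obtain ⟨t, ht, heq⟩ := rayOf_eq_imp (cand2_ne_zero κ lam) h
  have h1 := congrFun (congrArg Prod.fst heq) κ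
  have h2 := congrFun (congrArg Prod.snd heq) lam
  simp only [cand2, Prod.smul_fst, Prod.smul_snd, Pi.smul_apply, smul_eq_mul] at h1 h2
  constructor
  · by_contra hk
    have hne : ¬ (κ' = κ) := fun hh => hk hh.symm
    simp [hne] at h1
    omega
  · by_contra hk
    have hne : ¬ (lam' = lam) := fun hh => hk hh.symm
    simp [hne] at h2

lemma ray12 (he₁ : 2 ≤ e₁) (he₂ : 2 ≤ e₂) {κ κ' : Fin d₁} {lam lam' : Fin d₂}
    (h : rayOf (cand1 d₁ d₂ e₂ κ lam) = rayOf (cand2 d₁ d₂ e₁ κ' lam')) : False := by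
  obtain ⟨t, ht, heq⟩ := rayOf_eq_imp (cand1_ne_zero κ lam) h
  have h1 := congrFun (congrArg Prod.fst heq) κ
  have h2 := congrFun (congrArg Prod.snd heq) lam
  simp only [cand1, cand2, Prod.smul_fst, Prod.smul_snd, Pi.smul_apply, smul_eq_mul] at h1 h2
  have he₁' : (2 : ℝ) ≤ (e₁ : ℝ) := by exact_mod_cast he₁
  have he₂' : (2 : ℝ) ≤ (e₂ : ℝ) := by exact_mod_cast he₂
  by_cases hk : κ' = κ
  · by_cases hl : lam' = lam
    · simp [hk, hl] at h1 h2
      rw [← h2] at h1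
      nlinarith
    · simp [hl] at h2
      omega
  · simp [hk] at h1

end Aux7

/-- The cone `pos(A)` of the conic coupling problem has exactly `2·d₁·d₂`
extreme rays, spanned by the vectors `e_κ ⊕ e₂·e_λ` and `e₁·e_κ ⊕ e_λ`. -/
theorem conic_coupling_extreme_rays
    (d₁ d₂ e₁ e₂ : ℕ) (hd₁ : 2 ≤ d₁) (hd₂ : 2 ≤ d₂) (he₁ : 2 ≤ e₁) (he₂ : 2 ≤ e₂) :
    (∀ R : Set ((Fin d₁ → ℝ) × (Fin d₂ → ℝ)),
      IsExtremeRay (conicCone d₁ d₂ e₁ e₂) R ↔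
      ∃ (κ : Fin d₁) (lam : Fin d₂),
        R = rayOf ((fun κ' => if κ = κ' then (1 : ℝ) else 0),
                   (fun lam' => if lam = lam' then (e₂ : ℝ) else 0)) ∨
        R = rayOf ((fun κ' => if κ = κ' then (e₁ : ℝ) else 0),
                   (fun lam' => if lam = lam' then (1 : ℝ) else 0))) ∧
    {R : Set ((Fin d₁ → ℝ) × (Fin d₂ → ℝ)) |
        IsExtremeRay (conicCone d₁ d₂ e₁ e₂) R}.ncard = 2 * d₁ * d₂ := by
  have key : ∀ R : Set ((Fin d₁ → ℝ) × (Fin d₂ → ℝ)),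
      IsExtremeRay (conicCone d₁ d₂ e₁ e₂) R ↔
      ∃ (κ : Fin d₁) (lam : Fin d₂),
        R = rayOf (cand1 d₁ d₂ e₂ κ lam) ∨ R = rayOf (cand2 d₁ d₂ e₁ κ lam) := by
    intro R
    constructor
    · exact extreme_forward he₁ he₂
    · rintro ⟨κ, lam, rfl | rfl⟩
      · exact cand1_extreme (by omega) (by omega) κ lam
      · exact cand2_extreme (by omega) (by omega) κ lam
  refine ⟨fun R => key R, ?_⟩
  set g : Fin d₁ × Fin d₂ × Bool → Set ((Fin d₁ → ℝ) × (Fin d₂ → ℝ)) := fun p =>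
    if p.2.2 then rayOf (cand1 d₁ d₂ e₂ p.1 p.2.1) else rayOf (cand2 d₁ d₂ e₁ p.1 p.2.1)
    with hgdef
  have hSeq : {R : Set ((Fin d₁ → ℝ) × (Fin d₂ → ℝ)) |
      IsExtremeRay (conicCone d₁ d₂ e₁ e₂) R} = Set.range g := by
    ext R
    rw [Set.mem_setOf_eq, key R]
    constructor
    · rintro ⟨κ, lam, h | h⟩
      · exact ⟨(κ, lam, true), h.symm⟩
      · exact ⟨(κ, lam, false), h.symm⟩
    · rintro ⟨⟨κ, lam, b⟩, rfl⟩
      cases b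
      · exact ⟨κ, lam, Or.inr rfl⟩
      · exact ⟨κ, lam, Or.inl rfl⟩
  have hginj : Function.Injective g := by
    rintro ⟨κ, lam, b⟩ ⟨κ', lam', b'⟩ h
    cases b <;> cases b' <;> simp only [hgdef, if_true, if_false] at h
    · obtain ⟨h1, h2⟩ := ray22 he₁ h
      simp [h1, h2]
    · exact absurd h.symm (fun hh => ray12 he₁ he₂ hh)
    · exact absurd h (fun hh => ray12 he₁ he₂ hh)
    · obtain ⟨h1, h2⟩ := ray11 he₂ h
      simp [h1, h2]
  rw [hSeq, ← Set.image_univ, Set.ncard_image_of_injective _ hginj, Set.ncard_univ,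
    Nat.card_eq_fintype_card]
  simp [Fintype.card_prod]
  ring
end

section
/- The normalized volume of the polytope P_{d,e} = conv{ k·eᵢ : 1 ≤ i ≤ d, 1 ≤ k ≤ e } in ℝ^d equals e^d − 1, i.e., d! times its Euclidean volume equals e^d − 1. -/
open MeasureTheory


lemma measurableSet_B (n : ℕ) (c : ℝ) :
    MeasurableSet {x : Fin n → ℝ | (∀ i, 0 ≤ x i) ∧ ∑ i, x i ≤ c} := by
  apply MeasurableSet.inter
  · show MeasurableSet {x : Fin n → ℝ | ∀ i, 0 ≤ x i}
    rw [Set.setOf_forall]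
    exact MeasurableSet.iInter fun i =>
      measurableSet_le measurable_const (measurable_pi_apply i)
  · exact measurableSet_le (Finset.measurable_sum _ fun i _ => measurable_pi_apply i)
      measurable_const

lemma B_empty (n : ℕ) (c : ℝ) (hc : c < 0) :
    {x : Fin n → ℝ | (∀ i, 0 ≤ x i) ∧ ∑ i, x i ≤ c} = ∅ := by
  ext x
  simp only [Set.mem_setOf_eq, Set.mem_empty_iff_false, iff_false, not_and]
  intro h hs
  have : (0:ℝ) ≤ ∑ i, x i := Finset.sum_nonneg fun i _ => h i
  linarith

lemma volume_B (n : ℕ) : ∀ c : ℝ, 0 ≤ c →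
    volume {x : Fin n → ℝ | (∀ i, 0 ≤ x i) ∧ ∑ i, x i ≤ c}
      = ENNReal.ofReal (c ^ n / n.factorial) := by
  induction n with
  | zero =>
    intro c hc
    have : {x : Fin 0 → ℝ | (∀ i, 0 ≤ x i) ∧ ∑ i, x i ≤ c} = Set.univ := by
      ext x
      simp [Fin.forall_fin_zero_pi, hc]
    rw [this, MeasureTheory.volume_pi, Measure.pi_univ]
    simp [Nat.factorial]
  | succ n ih =>
    intro c hc
    have hmp := volume_preserving_piFinSuccAbove (fun _ : Fin (n+1) => ℝ) 0
    set T : Set (ℝ × (Fin n → ℝ)) :=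
      {p | 0 ≤ p.1 ∧ (∀ i, 0 ≤ p.2 i) ∧ p.1 + ∑ i, p.2 i ≤ c} with hT
    have hTm : MeasurableSet T := by
      apply MeasurableSet.inter
      · exact measurableSet_le measurable_const measurable_fst
      apply MeasurableSet.inter
      · show MeasurableSet {p : ℝ × (Fin n → ℝ) | ∀ i, 0 ≤ p.2 i}
        rw [Set.setOf_forall]
        exact MeasurableSet.iInter fun i =>
          measurableSet_le measurable_const measurable_snd.eval
      · exact measurableSet_le
          (measurable_fst.add ((Finset.measurable_sum _ fun i _ => measurable_pi_apply i).comp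
            measurable_snd)) measurable_const
    have hpre : {x : Fin (n+1) → ℝ | (∀ i, 0 ≤ x i) ∧ ∑ i, x i ≤ c}
        = (MeasurableEquiv.piFinSuccAbove (fun _ : Fin (n+1) => ℝ) 0) ⁻¹' T := by
      ext x
      simp only [Set.mem_preimage, MeasurableEquiv.piFinSuccAbove_apply, hT,
        Set.mem_setOf_eq, Fin.forall_fin_succ, Fin.sum_univ_succ]
      simp [Fin.succAbove, Fin.tail]
      tauto
    rw [hpre, hmp.measure_preimage hTm.nullMeasurableSet, Measure.volume_eq_prod, Measure.prod_apply hTm]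
    have hslice : ∀ t : ℝ, volume (Prod.mk t ⁻¹' T)
        = Set.indicator (Set.Icc 0 c)
            (fun t => ENNReal.ofReal ((c - t) ^ n / n.factorial)) t := by
      intro t
      have hpre2 : Prod.mk t ⁻¹' T
          = if 0 ≤ t then {y : Fin n → ℝ | (∀ i, 0 ≤ y i) ∧ ∑ i, y i ≤ c - t} else ∅ := by
        split_ifs with h
        · ext y; simp [hT, h, le_sub_iff_add_le']
        · ext y; simp [hT, h]
      by_cases h1 : t ∈ Set.Icc 0 c
      · rw [Set.indicator_of_mem h1, hpre2, if_pos h1.1, ih _ (by linarith [h1.2])]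
      · rw [Set.indicator_of_notMem h1, hpre2]
        rcases lt_or_ge t 0 with h | h
        · rw [if_neg (not_le.mpr h)]; simp
        · have : c - t < 0 := by
            simp only [Set.mem_Icc, not_and, not_le] at h1
            linarith [h1 h]
          rw [if_pos h, B_empty n _ this]; simp
    rw [lintegral_congr hslice, lintegral_indicator measurableSet_Icc _]
    have hcont : Continuous fun t : ℝ => (c - t) ^ n / n.factorial := by fun_prop
    rw [← ofReal_integral_eq_lintegral_ofReal
        (hcont.continuousOn.integrableOn_Icc)
        (by
          filter_upwards [ae_restrict_mem measurableSet_Icc] with t ht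
          have : 0 ≤ (c - t) ^ n := pow_nonneg (by linarith [ht.2]) n
          positivity)]
    have : ∫ t in Set.Icc 0 c, (c - t) ^ n / n.factorial
        = c ^ (n+1) / (n+1).factorial := by
      rw [MeasureTheory.integral_Icc_eq_integral_Ioc,
        ← intervalIntegral.integral_of_le hc, intervalIntegral.integral_div,
        intervalIntegral.integral_comp_sub_left (fun s => s ^ n) c]
      simp only [sub_zero, sub_self, integral_pow, Nat.factorial_succ]
      push_cast
      rw [zero_pow (by omega)]
      have h1 : (n.factorial : ℝ) ≠ 0 := Nat.cast_ne_zero.mpr n.factorial_ne_zero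
      field_simp
      ring
    rw [this]


lemma hyperplane_null (d : ℕ) (hd : 1 ≤ d) :
    volume {x : Fin d → ℝ | ∑ i, x i = 1} = 0 := by
  have : NeZero d := ⟨by omega⟩
  set f : (Fin d → ℝ) →ₗ[ℝ] ℝ :=
    { toFun := fun x => ∑ i, x i
      map_add' := fun a b => by simp [Finset.sum_add_distrib]
      map_smul' := fun r a => by simp [Finset.mul_sum] }
  set x₀ : Fin d → ℝ := Pi.single 0 1 with hx₀
  have hfx₀ : f x₀ = 1 := by simp [f, x₀]
  set s : AffineSubspace ℝ (Fin d → ℝ) := AffineSubspace.mk' x₀ (LinearMap.ker f)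
  have hcoe : {x : Fin d → ℝ | ∑ i, x i = 1} = (s : Set (Fin d → ℝ)) := by
    ext x
    rw [Set.mem_setOf_eq, SetLike.mem_coe, AffineSubspace.mem_mk',
      LinearMap.mem_ker]
    have : f (x -ᵥ x₀) = ∑ i, x i - 1 := by
      rw [vsub_eq_sub, map_sub, hfx₀]; rfl
    rw [this]
    constructor <;> intro h <;> linarith
  rw [hcoe]
  apply Measure.addHaar_affineSubspace
  intro htop
  have h2 : (2 : ℝ) • x₀ ∈ s := htop ▸ AffineSubspace.mem_top ℝ _ _
  rw [AffineSubspace.mem_mk', LinearMap.mem_ker] at h2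
  have : f ((2 : ℝ) • x₀ -ᵥ x₀) = 1 := by
    rw [vsub_eq_sub, map_sub, f.map_smul, hfx₀]; norm_num
  rw [h2] at this
  norm_num at this


lemma hull_eq (d e : ℕ) (hd : 1 ≤ d) (he : 2 ≤ e) :
    convexHull ℝ
        {x : Fin d → ℝ | ∃ (i : Fin d) (k : ℕ), 1 ≤ k ∧ k ≤ e ∧
          x = (k : ℝ) • (Pi.single i 1 : Fin d → ℝ)}
      = {x : Fin d → ℝ | (∀ i, 0 ≤ x i) ∧ 1 ≤ ∑ i, x i ∧ ∑ i, x i ≤ (e : ℝ)} := by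
  have hlin : IsLinearMap ℝ (fun x : Fin d → ℝ => ∑ i, x i) :=
    ⟨fun a b => by simp [Finset.sum_add_distrib], fun r a => by simp [Finset.mul_sum]⟩
  apply le_antisymm
  · apply convexHull_min
    · rintro x ⟨i, k, hk1, hke, rfl⟩
      refine ⟨fun j => ?_, ?_, ?_⟩
      · rcases eq_or_ne j i with rfl | h
        · simp
        · simp [Pi.single_apply, h]
      · have : ∑ j, ((k : ℝ) • (Pi.single i 1 : Fin d → ℝ)) j = (k : ℝ) := by
          simp only [Pi.smul_apply, smul_eq_mul]
          rw [← Finset.mul_sum, Finset.sum_pi_single']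
          simp
        rw [this]
        exact_mod_cast hk1
      · have : ∑ j, ((k : ℝ) • (Pi.single i 1 : Fin d → ℝ)) j = (k : ℝ) := by
          simp only [Pi.smul_apply, smul_eq_mul]
          rw [← Finset.mul_sum, Finset.sum_pi_single']
          simp
        rw [this]
        exact_mod_cast hke
    · refine Convex.inter ?_ (Convex.inter ?_ ?_)
      · show Convex ℝ {x : Fin d → ℝ | ∀ i, 0 ≤ x i}
        rw [Set.setOf_forall]
        exact convex_iInter fun i =>
          convex_halfSpace_ge ⟨fun a b => rfl, fun r a => rfl⟩ 0
      · exact convex_halfSpace_ge hlin 1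
      · exact convex_halfSpace_le hlin e
  · rintro x ⟨hpos, h1, h2⟩
    set s := ∑ i, x i with hs
    have hs1 : (1:ℝ) ≤ s := h1
    have hs0 : (0:ℝ) < s := by linarith
    have he1 : (1:ℝ) < (e:ℝ) := by exact_mod_cast he
    have h9 : (e:ℝ) - 1 ≠ 0 := by linarith
    have hAB : ((e:ℝ) - s)/((e:ℝ)-1) + (s-1)/((e:ℝ)-1) = 1 := by
      rw [← add_div, show ((e:ℝ)-s)+(s-1) = (e:ℝ)-1 by ring, div_self h9]
    have hAB2 : ((e:ℝ) - s)/((e:ℝ)-1) * 1 + (s-1)/((e:ℝ)-1) * e = s := by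
      rw [mul_one, div_mul_eq_mul_div, ← add_div,
        show ((e:ℝ)-s)+(s-1)*e = s*((e:ℝ)-1) by ring, mul_div_assoc, div_self h9, mul_one]
    set a : Fin d → ℝ := fun i => x i / s * (((e:ℝ) - s) / ((e:ℝ) - 1)) with ha
    set b : Fin d → ℝ := fun i => x i / s * ((s - 1) / ((e:ℝ) - 1)) with hb
    have hconv : Convex ℝ (convexHull ℝ
        {x : Fin d → ℝ | ∃ (i : Fin d) (k : ℕ), 1 ≤ k ∧ k ≤ e ∧
          x = (k : ℝ) • (Pi.single i 1 : Fin d → ℝ)}) := convex_convexHull ℝ _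
    have key := hconv.sum_mem (t := Finset.univ (α := Fin d ⊕ Fin d))
      (w := Sum.elim a b)
      (z := Sum.elim (fun i => (1:ℝ) • (Pi.single i 1 : Fin d → ℝ))
        (fun i => (e:ℝ) • (Pi.single i 1 : Fin d → ℝ)))
      (fun j _ => by
        rcases j with i | i
        · exact mul_nonneg (div_nonneg (hpos i) hs0.le)
            (div_nonneg (by linarith) (by linarith))
        · exact mul_nonneg (div_nonneg (hpos i) hs0.le)
            (div_nonneg (by linarith) (by linarith)))
      (by
        rw [Fintype.sum_sum_type]
        simp only [Sum.elim_inl, Sum.elim_inr]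
        rw [← Finset.sum_add_distrib]
        have : ∀ i, a i + b i = x i / s := by
          intro i
          show x i / s * (((e:ℝ) - s) / ((e:ℝ) - 1)) + x i / s * ((s - 1) / ((e:ℝ) - 1)) = x i / s
          rw [← mul_add, hAB, mul_one]
        rw [Finset.sum_congr rfl fun i _ => this i, ← Finset.sum_div, ← hs]
        field_simp)
      (fun j _ => by
        rcases j with i | i
        · exact subset_convexHull ℝ _ ⟨i, 1, le_refl 1, by omega, by norm_num⟩
        · exact subset_convexHull ℝ _ ⟨i, e, by omega, le_refl e, rfl⟩)
    convert key using 1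
    rw [Fintype.sum_sum_type]
    simp only [Sum.elim_inl, Sum.elim_inr, smul_smul]
    rw [← Finset.sum_add_distrib]
    have hxeq : ∀ i, (a i * 1) • (Pi.single i 1 : Fin d → ℝ)
        + (b i * e) • (Pi.single i 1 : Fin d → ℝ) = Pi.single i (x i) := by
      intro i
      rw [← add_smul]
      have : a i * 1 + b i * e = x i := by
        show x i / s * (((e:ℝ) - s) / ((e:ℝ) - 1)) * 1
            + x i / s * ((s - 1) / ((e:ℝ) - 1)) * e = x i
        rw [mul_assoc, mul_assoc, ← mul_add, hAB2, div_mul_cancel₀ _ hs0.ne']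
      rw [this]
      ext j
      simp [Pi.single_apply]
    rw [Finset.sum_congr rfl fun i _ => hxeq i]
    exact (Finset.univ_sum_single x).symm

lemma volume_B_open (d : ℕ) (hd : 1 ≤ d) :
    volume {x : Fin d → ℝ | (∀ i, 0 ≤ x i) ∧ ∑ i, x i < 1}
      = ENNReal.ofReal (1 / d.factorial) := by
  apply le_antisymm
  · calc volume {x : Fin d → ℝ | (∀ i, 0 ≤ x i) ∧ ∑ i, x i < 1}
        ≤ volume {x : Fin d → ℝ | (∀ i, 0 ≤ x i) ∧ ∑ i, x i ≤ 1} :=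
          measure_mono fun x ⟨h1, h2⟩ => ⟨h1, h2.le⟩
      _ = ENNReal.ofReal (1 / d.factorial) := by
          rw [volume_B d 1 one_pos.le, one_pow]
  · calc ENNReal.ofReal (1 / d.factorial)
        = volume {x : Fin d → ℝ | (∀ i, 0 ≤ x i) ∧ ∑ i, x i ≤ 1} := by
          rw [volume_B d 1 one_pos.le, one_pow]
      _ ≤ volume ({x : Fin d → ℝ | (∀ i, 0 ≤ x i) ∧ ∑ i, x i < 1}
            ∪ {x : Fin d → ℝ | ∑ i, x i = 1}) := by
          apply measure_mono
          rintro x ⟨h1, h2⟩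
          rcases lt_or_eq_of_le h2 with h | h
          · exact Or.inl ⟨h1, h⟩
          · exact Or.inr h
      _ ≤ volume {x : Fin d → ℝ | (∀ i, 0 ≤ x i) ∧ ∑ i, x i < 1}
            + volume {x : Fin d → ℝ | ∑ i, x i = 1} := measure_union_le _ _
      _ = volume {x : Fin d → ℝ | (∀ i, 0 ≤ x i) ∧ ∑ i, x i < 1} := by
          rw [hyperplane_null d hd, add_zero]

/-- The normalized volume of `P_{d,e} = conv{ k·eᵢ : 1 ≤ i ≤ d, 1 ≤ k ≤ e }`
in `ℝ^d` equals `e^d − 1`: `d!` times its Lebesgue volume is `e^d − 1`. -/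
theorem normalized_volume_Pde (d e : ℕ) (hd : 2 ≤ d) (he : 2 ≤ e) :
    (d.factorial : ℝ) *
      (volume (convexHull ℝ
        {x : Fin d → ℝ | ∃ (i : Fin d) (k : ℕ), 1 ≤ k ∧ k ≤ e ∧
          x = (k : ℝ) • (Pi.single i 1 : Fin d → ℝ)})).toReal
    = (e : ℝ) ^ d - 1 := by
  have hd1 : 1 ≤ d := by omega
  have he1 : (1:ℝ) ≤ (e:ℝ) := by exact_mod_cast Nat.one_le_of_lt he
  have hfac : (d.factorial : ℝ) ≠ 0 := Nat.cast_ne_zero.mpr d.factorial_ne_zero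
  have hepow : (1:ℝ) ≤ (e:ℝ) ^ d := one_le_pow₀ he1
  rw [hull_eq d e hd1 he]
  set A := {x : Fin d → ℝ | (∀ i, 0 ≤ x i) ∧ 1 ≤ ∑ i, x i ∧ ∑ i, x i ≤ (e:ℝ)} with hA
  set B := {x : Fin d → ℝ | (∀ i, 0 ≤ x i) ∧ ∑ i, x i < 1} with hB
  have hBmeas : MeasurableSet B := by
    apply MeasurableSet.inter
    · show MeasurableSet {x : Fin d → ℝ | ∀ i, 0 ≤ x i}
      rw [Set.setOf_forall]
      exact MeasurableSet.iInter fun i =>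
        measurableSet_le measurable_const (measurable_pi_apply i)
    · exact measurableSet_lt (Finset.measurable_sum _ fun i _ => measurable_pi_apply i)
        measurable_const
  have hdisj : Disjoint A B := by
    rw [Set.disjoint_left]
    rintro x ⟨_, h1, _⟩ ⟨_, h2⟩
    linarith
  have hunion : A ∪ B = {x : Fin d → ℝ | (∀ i, 0 ≤ x i) ∧ ∑ i, x i ≤ (e:ℝ)} := by
    ext x
    constructor
    · rintro (⟨h1, _, h3⟩ | ⟨h1, h2⟩)
      · exact ⟨h1, h3⟩
      · exact ⟨h1, by linarith⟩
    · rintro ⟨h1, h2⟩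
      rcases le_or_gt 1 (∑ i, x i) with h | h
      · exact Or.inl ⟨h1, h, h2⟩
      · exact Or.inr ⟨h1, h⟩
  have key := measure_union (μ := volume) hdisj hBmeas
  rw [hunion, volume_B d e (by linarith), volume_B_open d hd1] at key
  have hvolA : volume A = ENNReal.ofReal (((e:ℝ) ^ d - 1) / d.factorial) := by
    have h2 : ENNReal.ofReal (((e:ℝ) ^ d - 1) / d.factorial)
        + ENNReal.ofReal (1 / d.factorial) = ENNReal.ofReal ((e:ℝ) ^ d / d.factorial) := by
      rw [← ENNReal.ofReal_add (div_nonneg (by linarith) (by positivity)) (by positivity)]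
      congr 1
      field_simp
      ring
    have h3 : volume A + ENNReal.ofReal (1 / d.factorial)
        = ENNReal.ofReal (((e:ℝ) ^ d - 1) / d.factorial)
          + ENNReal.ofReal (1 / d.factorial) := by
      rw [h2, ← key]
    exact WithTop.add_right_cancel ENNReal.ofReal_ne_top h3
  rw [hvolA, ENNReal.toReal_ofReal (div_nonneg (by linarith) (by positivity))]
  rw [mul_comm, div_mul_cancel₀ _ hfac]
end

section
/- The normalized volume of conv(A ∪ {0}), where A is the column set of the conic coupling matrix, equals C(d₁+d₂, d₁)·( (e₁^{d₁}−1)(e₂^{d₂}−1) + (d₁/(d₁+d₂))·(e₂^{d₂}−1) + (d₂/(d₁+d₂))·(e₁^{d₁}−1) ). -/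
open MeasureTheory Set
open scoped ENNReal

namespace ConicAux

lemma measurable_sum' {n : ℕ} : Measurable (fun y : Fin n → ℝ => ∑ i, y i) :=
  Finset.measurable_sum _ fun i _ => measurable_pi_apply i

def cornerSet (n : ℕ) (r : ℝ) : Set (Fin n → ℝ) :=
  {y | (∀ i, 0 ≤ y i) ∧ ∑ i, y i ≤ r}

lemma measurableSet_nonneg (n : ℕ) : MeasurableSet {y : Fin n → ℝ | ∀ i, 0 ≤ y i} := by
  have : {y : Fin n → ℝ | ∀ i, 0 ≤ y i} = ⋂ i, {y : Fin n → ℝ | 0 ≤ y i} := by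
    ext y; simp
  rw [this]
  exact MeasurableSet.iInter fun i => measurableSet_le measurable_const (measurable_pi_apply i)

lemma measurableSet_corner (n : ℕ) (r : ℝ) : MeasurableSet (cornerSet n r) :=
  (measurableSet_nonneg n).inter (measurableSet_le measurable_sum' measurable_const)

lemma corner_empty {n : ℕ} {r : ℝ} (hr : r < 0) : cornerSet n r = ∅ := by
  ext y
  simp only [cornerSet, mem_setOf_eq, mem_empty_iff_false, iff_false, not_and]
  intro hy hsum
  exact absurd (le_trans (Finset.sum_nonneg fun i _ => hy i) hsum) (not_le.2 hr)

lemma volume_corner : ∀ (n : ℕ) (r : ℝ), 0 ≤ r →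
    volume (cornerSet n r) = ENNReal.ofReal (r ^ n / n.factorial) := by
  intro n
  induction n with
  | zero =>
    intro r hr
    have : cornerSet 0 r = univ := by
      ext y; simp [cornerSet, hr]
    rw [this]
    simp [volume_pi, Measure.pi_univ]
  | succ n ih =>
    intro r hr
    have hmp := (measurePreserving_piFinSuccAbove (fun _ : Fin (n+1) => (volume : Measure ℝ)) 0).symm
    have hms : MeasurableSet (cornerSet (n+1) r) := measurableSet_corner _ _
    have key : volume (cornerSet (n+1) r)
        = ((volume : Measure ℝ).prod (Measure.pi fun _ : Fin n => (volume : Measure ℝ)))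
            ((MeasurableEquiv.piFinSuccAbove (fun _ : Fin (n+1) => ℝ) 0).symm ⁻¹' cornerSet (n+1) r) := by
      rw [volume_pi]
      exact (hmp.measure_preimage hms.nullMeasurableSet).symm
    have hpre : (MeasurableEquiv.piFinSuccAbove (fun _ : Fin (n+1) => ℝ) 0).symm ⁻¹' cornerSet (n+1) r
        = {p : ℝ × (Fin n → ℝ) | 0 ≤ p.1 ∧ (∀ j, 0 ≤ p.2 j) ∧ p.1 + ∑ j, p.2 j ≤ r} := by
      ext ⟨t, y⟩
      simp only [mem_preimage, MeasurableEquiv.piFinSuccAbove_symm_apply, cornerSet, mem_setOf_eq,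
        Fin.insertNthEquiv_apply, Fin.forall_iff_succAbove (0 : Fin (n+1)),
        Fin.sum_univ_succAbove _ (0 : Fin (n+1)), Fin.insertNth_apply_same,
        Fin.insertNth_apply_succAbove]
      tauto
    rw [key, hpre]
    have hmeas2 : MeasurableSet {p : ℝ × (Fin n → ℝ) | 0 ≤ p.1 ∧ (∀ j, 0 ≤ p.2 j) ∧ p.1 + ∑ j, p.2 j ≤ r} := by
      have hA : MeasurableSet {p : ℝ × (Fin n → ℝ) | ∀ j, 0 ≤ p.2 j} := by
        have : {p : ℝ × (Fin n → ℝ) | ∀ j, 0 ≤ p.2 j} = ⋂ j, {p : ℝ × (Fin n → ℝ) | 0 ≤ p.2 j} := by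
          ext p; simp
        rw [this]
        exact MeasurableSet.iInter fun j =>
          measurableSet_le measurable_const (measurable_snd.eval)
      exact (measurableSet_le measurable_const measurable_fst).inter (hA.inter
        (measurableSet_le (measurable_fst.add (measurable_sum'.comp measurable_snd)) measurable_const))
    rw [Measure.prod_apply hmeas2]
    have hslice : ∀ t : ℝ,
        (Measure.pi fun _ : Fin n => (volume : Measure ℝ))
          (Prod.mk t ⁻¹' {p : ℝ × (Fin n → ℝ) | 0 ≤ p.1 ∧ (∀ j, 0 ≤ p.2 j) ∧ p.1 + ∑ j, p.2 j ≤ r})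
        = (Icc (0:ℝ) r).indicator (fun t => ENNReal.ofReal ((r - t) ^ n / n.factorial)) t := by
      intro t
      by_cases ht : 0 ≤ t
      · by_cases htr : t ≤ r
        · have : Prod.mk t ⁻¹' {p : ℝ × (Fin n → ℝ) | 0 ≤ p.1 ∧ (∀ j, 0 ≤ p.2 j) ∧ p.1 + ∑ j, p.2 j ≤ r}
              = cornerSet n (r - t) := by
            ext y
            simp only [mem_preimage, mem_setOf_eq, cornerSet, ht, true_and]
            constructor
            · rintro ⟨h1, h2⟩; exact ⟨h1, by linarith⟩
            · rintro ⟨h1, h2⟩; exact ⟨h1, by linarith⟩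
          rw [this, ← volume_pi, ih (r - t) (by linarith), indicator_of_mem (mem_Icc.mpr ⟨ht, htr⟩)]
        · have : Prod.mk t ⁻¹' {p : ℝ × (Fin n → ℝ) | 0 ≤ p.1 ∧ (∀ j, 0 ≤ p.2 j) ∧ p.1 + ∑ j, p.2 j ≤ r}
              = cornerSet n (r - t) := by
            ext y
            simp only [mem_preimage, mem_setOf_eq, cornerSet, ht, true_and]
            constructor
            · rintro ⟨h1, h2⟩; exact ⟨h1, by linarith⟩
            · rintro ⟨h1, h2⟩; exact ⟨h1, by linarith⟩
          rw [this, corner_empty (by linarith), indicator_of_notMem (fun h => htr h.2)]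
          simp
      · have : Prod.mk t ⁻¹' {p : ℝ × (Fin n → ℝ) | 0 ≤ p.1 ∧ (∀ j, 0 ≤ p.2 j) ∧ p.1 + ∑ j, p.2 j ≤ r}
            = ∅ := by
          ext y; simp [ht]
        rw [this, indicator_of_notMem (fun h => ht h.1)]
        simp
    simp_rw [hslice]
    rw [lintegral_indicator measurableSet_Icc]
    have hint : IntegrableOn (fun t : ℝ => (r - t) ^ n / n.factorial) (Icc 0 r) volume :=
      (Continuous.div_const (by continuity) _).integrableOn_Icc
    rw [← ofReal_integral_eq_lintegral_ofReal hint]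
    · congr 1
      rw [MeasureTheory.integral_Icc_eq_integral_Ioc, ← intervalIntegral.integral_of_le hr]
      rw [intervalIntegral.integral_div]
      have : (∫ t in (0:ℝ)..r, (r - t) ^ n) = r ^ (n+1) / (n+1) := by
        rw [intervalIntegral.integral_comp_sub_left (fun x => x ^ n) r]
        simp [integral_pow]
      rw [this, Nat.factorial_succ]
      push_cast
      have h1 : (n:ℝ) + 1 ≠ 0 := by positivity
      have h2 : (n.factorial : ℝ) ≠ 0 := by positivity
      field_simp
    · refine (ae_restrict_iff' measurableSet_Icc).2 (Filter.Eventually.of_forall fun t ht => ?_)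
      have : 0 ≤ r - t := by linarith [ht.2]
      positivity


/-- The hyperplane of fixed coordinate-sum is null. -/
lemma volume_sum_eq (n : ℕ) (hn : 0 < n) (a : ℝ) :
    volume {y : Fin n → ℝ | ∑ i, y i = a} = 0 := by
  classical
  set L : (Fin n → ℝ) →ₗ[ℝ] ℝ :=
    { toFun := fun y => ∑ i, y i
      map_add' := by intro x y; simp [Finset.sum_add_distrib]
      map_smul' := by intro c x; simp [Finset.mul_sum] }
  have hL : ∀ y : Fin n → ℝ, L y = ∑ i, y i := fun _ => rfl
  set y₀ : Fin n → ℝ := fun _ => a / n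
  have hy₀ : ∑ i, y₀ i = a := by
    simp only [y₀, Finset.sum_const, Finset.card_univ, Fintype.card_fin, nsmul_eq_mul]
    field_simp
  set s₀ : AffineSubspace ℝ (Fin n → ℝ) := AffineSubspace.mk' y₀ (LinearMap.ker L)
  have hset : {y : Fin n → ℝ | ∑ i, y i = a} = (s₀ : Set (Fin n → ℝ)) := by
    ext y
    simp only [mem_setOf_eq, SetLike.mem_coe, s₀, AffineSubspace.mem_mk',
      LinearMap.mem_ker, vsub_eq_sub]
    rw [hL]
    rw [show (∑ i, (y - y₀) i) = (∑ i, y i) - ∑ i, y₀ i by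
      simp [Finset.sum_sub_distrib]]
    rw [hy₀]
    constructor
    · intro h; linarith
    · intro h; linarith
  have hne : s₀ ≠ ⊤ := by
    intro h
    have hmem : (y₀ + Pi.single (⟨0, hn⟩ : Fin n) 1) ∈ s₀ := by
      rw [h]; exact AffineSubspace.mem_top ℝ _ _
    rw [AffineSubspace.mem_mk'] at hmem
    rw [LinearMap.mem_ker] at hmem
    have : L (y₀ + Pi.single (⟨0, hn⟩ : Fin n) 1 -ᵥ y₀) = 1 := by
      rw [vsub_eq_sub, add_sub_cancel_left, hL, Finset.sum_pi_single']
      simp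
    rw [hmem] at this
    exact zero_ne_one this
  rw [hset]
  exact Measure.addHaar_affineSubspace volume s₀ hne

lemma volume_corner_lt (n : ℕ) (hn : 0 < n) (r : ℝ) (hr : 0 ≤ r) :
    volume {y : Fin n → ℝ | (∀ i, 0 ≤ y i) ∧ ∑ i, y i < r}
      = ENNReal.ofReal (r ^ n / n.factorial) := by
  refine le_antisymm ?_ ?_
  · rw [← volume_corner n r hr]
    exact measure_mono fun y hy => ⟨hy.1, le_of_lt hy.2⟩
  · rw [← volume_corner n r hr]
    calc volume (cornerSet n r)
        ≤ volume ({y : Fin n → ℝ | (∀ i, 0 ≤ y i) ∧ ∑ i, y i < r}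
            ∪ {y : Fin n → ℝ | ∑ i, y i = r}) := by
          refine measure_mono fun y hy => ?_
          rcases lt_or_eq_of_le hy.2 with h | h
          · exact Or.inl ⟨hy.1, h⟩
          · exact Or.inr h
      _ ≤ volume {y : Fin n → ℝ | (∀ i, 0 ≤ y i) ∧ ∑ i, y i < r}
            + volume {y : Fin n → ℝ | ∑ i, y i = r} := measure_union_le _ _
      _ = volume {y : Fin n → ℝ | (∀ i, 0 ≤ y i) ∧ ∑ i, y i < r} := by
          rw [volume_sum_eq n hn r, add_zero]

lemma measurableSet_slab (n : ℕ) (a b : ℝ) :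
    MeasurableSet {y : Fin n → ℝ | (∀ i, 0 ≤ y i) ∧ a < ∑ i, y i ∧ ∑ i, y i ≤ b} :=
  (measurableSet_nonneg n).inter
    ((measurableSet_lt measurable_const measurable_sum').inter
      (measurableSet_le measurable_sum' measurable_const))

lemma volume_slab (n : ℕ) (a b : ℝ) (ha : 0 ≤ a) (hb : 0 ≤ b) :
    volume {y : Fin n → ℝ | (∀ i, 0 ≤ y i) ∧ a < ∑ i, y i ∧ ∑ i, y i ≤ b}
      = ENNReal.ofReal (b ^ n / n.factorial) - ENNReal.ofReal (a ^ n / n.factorial) := by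
  rcases le_or_gt b a with hba | hab
  · have hempty : {y : Fin n → ℝ | (∀ i, 0 ≤ y i) ∧ a < ∑ i, y i ∧ ∑ i, y i ≤ b} = ∅ := by
      ext y
      simp only [mem_setOf_eq, mem_empty_iff_false, iff_false, not_and]
      intro _ h1 h2
      linarith
    rw [hempty, measure_empty, eq_comm, tsub_eq_zero_iff_le]
    refine ENNReal.ofReal_le_ofReal ?_
    have h1 : b ^ n ≤ a ^ n := pow_le_pow_left₀ hb hba n
    have h2 : (0:ℝ) < n.factorial := by positivity
    exact div_le_div_of_nonneg_right h1 h2.le |>.trans_eq rfl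
  · have hunion : cornerSet n b = cornerSet n a ∪
        {y : Fin n → ℝ | (∀ i, 0 ≤ y i) ∧ a < ∑ i, y i ∧ ∑ i, y i ≤ b} := by
      ext y
      simp only [cornerSet, mem_setOf_eq, mem_union]
      constructor
      · rintro ⟨h1, h2⟩
        rcases le_or_gt (∑ i, y i) a with h | h
        · exact Or.inl ⟨h1, h⟩
        · exact Or.inr ⟨h1, h, h2⟩
      · rintro (⟨h1, h2⟩ | ⟨h1, h2, h3⟩)
        · exact ⟨h1, h2.trans hab.le⟩
        · exact ⟨h1, h3⟩
    have hdisj : Disjoint (cornerSet n a)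
        {y : Fin n → ℝ | (∀ i, 0 ≤ y i) ∧ a < ∑ i, y i ∧ ∑ i, y i ≤ b} := by
      rw [Set.disjoint_left]
      rintro y ⟨_, h2⟩ ⟨_, h3, _⟩
      exact absurd h3 (not_lt.2 h2)
    have := measure_union (μ := volume) hdisj (measurableSet_slab n a b)
    rw [← hunion, volume_corner n b hb, volume_corner n a ha] at this
    rw [eq_comm]
    exact ENNReal.sub_eq_of_eq_add_rev ENNReal.ofReal_ne_top this
  

/-- Converting a `lintegral` of `ofReal` over `Ioc 0 c` to an interval integral. -/
lemma lintegral_Ioc_ofReal {f : ℝ → ℝ} (hf : Continuous f) (c : ℝ) (hc : 0 ≤ c)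
    (hnn : ∀ s ∈ Ioc (0:ℝ) c, 0 ≤ f s) :
    ∫⁻ s in Ioc (0:ℝ) c, ENNReal.ofReal (f s) = ENNReal.ofReal (∫ s in (0:ℝ)..c, f s) := by
  rw [intervalIntegral.integral_of_le hc]
  rw [← ofReal_integral_eq_lintegral_ofReal]
  · exact (hf.integrableOn_Icc).mono_set Ioc_subset_Icc_self
  · exact (ae_restrict_iff' measurableSet_Ioc).2 (Filter.Eventually.of_forall hnn)

lemma density_measurable (k : ℕ) : Measurable (fun s : ℝ => ENNReal.ofReal (s ^ k / k.factorial)) :=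
  ((measurable_id.pow_const k).div_const _).ennreal_ofReal

/-- Pushforward of the restriction of Lebesgue to the corner simplex under the sum map. -/
lemma map_sum_corner (n : ℕ) (hn : 0 < n) (M : ℝ) (hM : 0 ≤ M) :
    Measure.map (fun y : Fin n → ℝ => ∑ i, y i) (volume.restrict (cornerSet n M))
      = (volume.restrict (Ioc 0 M)).withDensity
          (fun s => ENNReal.ofReal (s ^ (n-1) / (n-1).factorial)) := by
  obtain ⟨m, rfl⟩ : ∃ m, n = m + 1 := ⟨n - 1, (Nat.succ_pred_eq_of_pos hn).symm⟩
  simp only [Nat.add_sub_cancel]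
  have hfin : IsFiniteMeasure (volume.restrict (cornerSet (m+1) M)) := by
    constructor
    rw [Measure.restrict_apply_univ, volume_corner (m+1) M hM]
    exact ENNReal.ofReal_lt_top
  refine Measure.ext_of_Iic _ _ (fun r => ?_)
  -- LHS
  rw [Measure.map_apply measurable_sum' measurableSet_Iic,
    Measure.restrict_apply (measurable_sum' measurableSet_Iic)]
  have hset : (fun y : Fin (m+1) → ℝ => ∑ i, y i) ⁻¹' Iic r ∩ cornerSet (m+1) M
      = cornerSet (m+1) (min r M) := by
    ext y
    simp only [mem_inter_iff, mem_preimage, mem_Iic, cornerSet, mem_setOf_eq, le_min_iff]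
    tauto
  rw [hset]
  -- RHS
  rw [withDensity_apply _ measurableSet_Iic, Measure.restrict_restrict measurableSet_Iic]
  have hset2 : Iic r ∩ Ioc 0 M = Ioc 0 (min r M) := by
    ext s
    simp only [mem_inter_iff, mem_Iic, mem_Ioc, le_min_iff]
    tauto
  rw [hset2]
  rcases le_or_gt 0 (min r M) with hmin | hmin
  · rw [volume_corner _ _ hmin,
      lintegral_Ioc_ofReal (by continuity) _ hmin (fun s hs => by have h0 := hs.1.le; positivity)]
    congr 1
    rw [intervalIntegral.integral_div, integral_pow]
    rw [Nat.factorial_succ]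
    push_cast
    have h1 : (m:ℝ) + 1 ≠ 0 := by positivity
    have h2 : (m.factorial : ℝ) ≠ 0 := by positivity
    field_simp
    simp
  · rw [corner_empty hmin, measure_empty]
    rw [Ioc_eq_empty (by linarith)]
    rw [Measure.restrict_empty, lintegral_zero_measure]

/-- Integrating a function of the coordinate sum over the corner simplex. -/
lemma lintegral_corner_sum (n : ℕ) (hn : 0 < n) (M : ℝ) (hM : 0 ≤ M)
    (g : ℝ → ℝ≥0∞) (hg : Measurable g) :
    ∫⁻ x in cornerSet n M, g (∑ i, x i) ∂volume
      = ∫⁻ s in Ioc (0:ℝ) M, ENNReal.ofReal (s ^ (n-1) / (n-1).factorial) * g s := by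
  rw [← lintegral_map hg measurable_sum', map_sum_corner n hn M hM,
    lintegral_withDensity_eq_lintegral_mul _ (density_measurable (n-1)) hg]
  rfl


lemma smul_single {n : ℕ} (c : ℝ) (κ : Fin n) :
    c • (Pi.single κ 1 : Fin n → ℝ) = Pi.single κ c := by
  funext j
  rcases eq_or_ne j κ with h | h
  · subst h; simp
  · simp [Pi.single_apply, h]

lemma sum_single {n : ℕ} (c : ℝ) (κ : Fin n) :
    ∑ j, (Pi.single κ c : Fin n → ℝ) j = c := by
  simp [Finset.sum_pi_single']

def genSet (d₁ d₂ e₁ e₂ : ℕ) : Set ((Fin d₁ → ℝ) × (Fin d₂ → ℝ)) :=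
  {v | ∃ (κ : Fin d₁) (i : ℕ) (lam : Fin d₂) (j : ℕ),
      1 ≤ i ∧ i ≤ e₁ ∧ 1 ≤ j ∧ j ≤ e₂ ∧
      v = ((i : ℝ) • (Pi.single κ 1 : Fin d₁ → ℝ), (j : ℝ) • (Pi.single lam 1 : Fin d₂ → ℝ))}

def polytope (d₁ d₂ e₁ e₂ : ℕ) : Set ((Fin d₁ → ℝ) × (Fin d₂ → ℝ)) :=
  {p | (∀ κ, 0 ≤ p.1 κ) ∧ (∀ l, 0 ≤ p.2 l) ∧ (∑ κ, p.1 κ) ≤ e₁ ∧ (∑ l, p.2 l) ≤ e₂ ∧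
    (∑ l, p.2 l) ≤ e₂ * ∑ κ, p.1 κ ∧ (∑ κ, p.1 κ) ≤ e₁ * ∑ l, p.2 l}

section
variable (d₁ d₂ e₁ e₂ : ℕ)

lemma convex_polytope : Convex ℝ (polytope d₁ d₂ e₁ e₂) := by
  rintro p ⟨hp1, hp2, hp3, hp4, hp5, hp6⟩ q ⟨hq1, hq2, hq3, hq4, hq5, hq6⟩ a b ha hb hab
  have hco1 : ∀ κ, (a • p + b • q).1 κ = a * p.1 κ + b * q.1 κ := fun κ => rfl
  have hco2 : ∀ l, (a • p + b • q).2 l = a * p.2 l + b * q.2 l := fun l => rfl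
  have hsum1 : ∑ κ, (a • p + b • q).1 κ = a * ∑ κ, p.1 κ + b * ∑ κ, q.1 κ := by
    simp_rw [hco1, Finset.sum_add_distrib, Finset.mul_sum]
  have hsum2 : ∑ l, (a • p + b • q).2 l = a * ∑ l, p.2 l + b * ∑ l, q.2 l := by
    simp_rw [hco2, Finset.sum_add_distrib, Finset.mul_sum]
  refine ⟨fun κ => ?_, fun l => ?_, ?_, ?_, ?_, ?_⟩
  · rw [hco1]; exact add_nonneg (mul_nonneg ha (hp1 κ)) (mul_nonneg hb (hq1 κ))
  · rw [hco2]; exact add_nonneg (mul_nonneg ha (hp2 l)) (mul_nonneg hb (hq2 l))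
  · rw [hsum1]; nlinarith
  · rw [hsum2]; nlinarith
  · rw [hsum1, hsum2]; nlinarith
  · rw [hsum1, hsum2]; nlinarith

lemma gen_subset_polytope (he₁ : 2 ≤ e₁) (he₂ : 2 ≤ e₂) :
    insert 0 (genSet d₁ d₂ e₁ e₂) ⊆ polytope d₁ d₂ e₁ e₂ := by
  rintro v (rfl | ⟨κ, i, lam, j, hi1, hi2, hj1, hj2, rfl⟩)
  · exact ⟨fun κ => le_refl 0, fun l => le_refl 0, by simp [Nat.cast_nonneg],
      by simp [Nat.cast_nonneg], by simp, by simp⟩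
  · have hi1' : (1:ℝ) ≤ i := by exact_mod_cast hi1
    have hi2' : (i:ℝ) ≤ e₁ := by exact_mod_cast hi2
    have hj1' : (1:ℝ) ≤ j := by exact_mod_cast hj1
    have hj2' : (j:ℝ) ≤ e₂ := by exact_mod_cast hj2
    have he₁' : (1:ℝ) ≤ e₁ := by exact_mod_cast le_trans one_le_two he₁
    have he₂' : (1:ℝ) ≤ e₂ := by exact_mod_cast le_trans one_le_two he₂
    rw [show ((i:ℝ) • (Pi.single κ 1 : Fin d₁ → ℝ), (j:ℝ) • (Pi.single lam 1 : Fin d₂ → ℝ))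
        = (Pi.single κ (i:ℝ), Pi.single lam (j:ℝ)) by rw [smul_single, smul_single]]
    refine ⟨fun κ' => ?_, fun l' => ?_, ?_, ?_, ?_, ?_⟩ <;> dsimp only
    · rcases eq_or_ne κ' κ with h | h
      · subst h; simp
      · simp [Pi.single_apply, h]
    · rcases eq_or_ne l' lam with h | h
      · subst h; simp
      · simp [Pi.single_apply, h]
    · rw [sum_single]; exact hi2'
    · rw [sum_single]; exact hj2'
    · rw [sum_single, sum_single]; nlinarith
    · rw [sum_single, sum_single]; nlinarith

/-- key 2D lemma: scaled vertex pairs are in the hull -/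
lemma q_mem_hull (he₁ : 2 ≤ e₁) (he₂ : 2 ≤ e₂) (κ : Fin d₁) (l : Fin d₂)
    (s t : ℝ) (hs : 0 < s) (ht : 0 < t) (hse : s ≤ e₁) (hte : t ≤ e₂)
    (hts : t ≤ e₂ * s) (hst : s ≤ e₁ * t) :
    (s • (Pi.single κ 1 : Fin d₁ → ℝ), t • (Pi.single l 1 : Fin d₂ → ℝ))
      ∈ convexHull ℝ (insert 0 (genSet d₁ d₂ e₁ e₂)) := by
  set C := convexHull ℝ (insert 0 (genSet d₁ d₂ e₁ e₂)) with hC_def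
  have hC : Convex ℝ C := convex_convexHull ℝ _
  have h0 : (0 : (Fin d₁ → ℝ) × (Fin d₂ → ℝ)) ∈ C :=
    subset_convexHull ℝ _ (mem_insert _ _)
  have hgen : ∀ i j : ℕ, 1 ≤ i → i ≤ e₁ → 1 ≤ j → j ≤ e₂ →
      ((i:ℝ) • (Pi.single κ 1 : Fin d₁ → ℝ), (j:ℝ) • (Pi.single l 1 : Fin d₂ → ℝ)) ∈ C :=
    fun i j h1 h2 h3 h4 => subset_convexHull ℝ _
      (mem_insert_of_mem _ ⟨κ, i, l, j, h1, h2, h3, h4, rfl⟩)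
  have he₁R : (2:ℝ) ≤ e₁ := by exact_mod_cast he₁
  have he₂R : (2:ℝ) ≤ e₂ := by exact_mod_cast he₂
  have he₁1 : (1:ℝ) < e₁ := by linarith
  have he₂1 : (1:ℝ) < e₂ := by linarith
  have he₁0 : (0:ℝ) < e₁ := by linarith
  have he₂0 : (0:ℝ) < e₂ := by linarith
  -- combine three hull points with nonneg coefficients summing ≤ 1
  have combo : ∀ (u v : (Fin d₁ → ℝ) × (Fin d₂ → ℝ)) (α β : ℝ), u ∈ C → v ∈ C →
      0 ≤ α → 0 ≤ β → α + β ≤ 1 → α • u + β • v ∈ C := by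
    intro u v α β hu hv hα hβ hαβ
    rcases eq_or_lt_of_le (add_nonneg hα hβ) with hc0 | hcpos
    · have hα0 : α = 0 := by linarith
      have hβ0 : β = 0 := by linarith
      simpa [hα0, hβ0] using h0
    · set c := α + β with hc_def
      have hcne : c ≠ 0 := ne_of_gt hcpos
      have hw : (α/c) • u + (β/c) • v ∈ C :=
        hC hu hv (div_nonneg hα (le_of_lt hcpos)) (div_nonneg hβ (le_of_lt hcpos))
          (by field_simp; rw [hc_def])
      have hmem := hC hw h0 (show (0:ℝ) ≤ c from le_of_lt hcpos)
        (show (0:ℝ) ≤ 1 - c by linarith) (by ring)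
      have heq : c • ((α/c) • u + (β/c) • v) + (1 - c) • (0 : (Fin d₁ → ℝ) × (Fin d₂ → ℝ))
          = α • u + β • v := by
        rw [smul_zero, add_zero, smul_add, smul_smul, smul_smul,
          mul_div_cancel₀ α hcne, mul_div_cancel₀ β hcne]
      rwa [heq] at hmem
  rcases le_total ((e₂:ℝ) * s) ((e₁:ℝ) * t) with hcase | hcase
  · -- upper triangle: combination of (1, e₂) and (e₁, e₂)
    set α := ((e₁:ℝ) * t - e₂ * s) / (e₂ * (e₁ - 1)) with hα_def
    set β := ((e₂:ℝ) * s - t) / (e₂ * (e₁ - 1)) with hβ_def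
    have hden : (0:ℝ) < e₂ * (e₁ - 1) := mul_pos he₂0 (by linarith)
    have hα : 0 ≤ α := div_nonneg (by linarith) hden.le
    have hβ : 0 ≤ β := div_nonneg (by linarith) hden.le
    have hsum : α + β = t / e₂ := by
      rw [hα_def, hβ_def, ← add_div]
      rw [show (e₁:ℝ) * t - e₂ * s + (e₂ * s - t) = t * (e₁ - 1) by ring]
      rw [mul_comm (e₂:ℝ) (e₁ - 1), ← div_div]
      rw [mul_div_assoc, div_self (by linarith : (e₁:ℝ) - 1 ≠ 0), mul_one]
    have hαβ1 : α + β ≤ 1 := by rw [hsum]; exact (div_le_one he₂0).2 hte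
    have hu := hgen 1 e₂ le_rfl (by omega) (by omega) le_rfl
    have hv := hgen e₁ e₂ (by omega) le_rfl (by omega) le_rfl
    have hmem := combo _ _ α β hu hv hα hβ hαβ1
    have h1 : α * ((1:ℕ):ℝ) + β * (e₁:ℝ) = s := by
      rw [hα_def, hβ_def]
      have : (e₁:ℝ) - 1 ≠ 0 := by linarith
      field_simp
      ring
    have h2 : α * ((e₂:ℕ):ℝ) + β * ((e₂:ℕ):ℝ) = t := by
      have : α * (e₂:ℝ) + β * (e₂:ℝ) = (α + β) * e₂ := by ring
      rw [this, hsum, div_mul_cancel₀ _ (ne_of_gt he₂0)]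
    have key : α • (((1:ℕ):ℝ) • (Pi.single κ 1 : Fin d₁ → ℝ),
          ((e₂:ℕ):ℝ) • (Pi.single l 1 : Fin d₂ → ℝ))
        + β • (((e₁:ℕ):ℝ) • (Pi.single κ 1 : Fin d₁ → ℝ),
          ((e₂:ℕ):ℝ) • (Pi.single l 1 : Fin d₂ → ℝ))
        = (s • (Pi.single κ 1 : Fin d₁ → ℝ), t • (Pi.single l 1 : Fin d₂ → ℝ)) := by
      apply Prod.ext
      · show α • (((1:ℕ):ℝ) • (Pi.single κ 1 : Fin d₁ → ℝ))
            + β • (((e₁:ℕ):ℝ) • (Pi.single κ 1 : Fin d₁ → ℝ)) = _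
        rw [smul_smul, smul_smul, ← add_smul, h1]
      · show α • (((e₂:ℕ):ℝ) • (Pi.single l 1 : Fin d₂ → ℝ))
            + β • (((e₂:ℕ):ℝ) • (Pi.single l 1 : Fin d₂ → ℝ)) = _
        rw [smul_smul, smul_smul, ← add_smul, h2]
    rwa [key] at hmem
  · -- lower triangle: combination of (e₁, 1) and (e₁, e₂)
    set α := ((e₂:ℝ) * s - e₁ * t) / (e₁ * (e₂ - 1)) with hα_def
    set β := ((e₁:ℝ) * t - s) / (e₁ * (e₂ - 1)) with hβ_def
    have hden : (0:ℝ) < e₁ * (e₂ - 1) := mul_pos he₁0 (by linarith)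
    have hα : 0 ≤ α := div_nonneg (by linarith) hden.le
    have hβ : 0 ≤ β := div_nonneg (by linarith) hden.le
    have hsum : α + β = s / e₁ := by
      rw [hα_def, hβ_def, ← add_div]
      rw [show (e₂:ℝ) * s - e₁ * t + (e₁ * t - s) = s * (e₂ - 1) by ring]
      rw [mul_comm (e₁:ℝ) (e₂ - 1), ← div_div]
      rw [mul_div_assoc, div_self (by linarith : (e₂:ℝ) - 1 ≠ 0), mul_one]
    have hαβ1 : α + β ≤ 1 := by rw [hsum]; exact (div_le_one he₁0).2 hse
    have hu := hgen e₁ 1 (by omega) le_rfl le_rfl (by omega)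
    have hv := hgen e₁ e₂ (by omega) le_rfl (by omega) le_rfl
    have hmem := combo _ _ α β hu hv hα hβ hαβ1
    have h1 : α * ((e₁:ℕ):ℝ) + β * ((e₁:ℕ):ℝ) = s := by
      have : α * (e₁:ℝ) + β * (e₁:ℝ) = (α + β) * e₁ := by ring
      rw [this, hsum, div_mul_cancel₀ _ (ne_of_gt he₁0)]
    have h2 : α * ((1:ℕ):ℝ) + β * ((e₂:ℕ):ℝ) = t := by
      rw [hα_def, hβ_def]
      have : (e₂:ℝ) - 1 ≠ 0 := by linarith
      field_simp
      ring
    have key : α • (((e₁:ℕ):ℝ) • (Pi.single κ 1 : Fin d₁ → ℝ),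
          ((1:ℕ):ℝ) • (Pi.single l 1 : Fin d₂ → ℝ))
        + β • (((e₁:ℕ):ℝ) • (Pi.single κ 1 : Fin d₁ → ℝ),
          ((e₂:ℕ):ℝ) • (Pi.single l 1 : Fin d₂ → ℝ))
        = (s • (Pi.single κ 1 : Fin d₁ → ℝ), t • (Pi.single l 1 : Fin d₂ → ℝ)) := by
      apply Prod.ext
      · show α • (((e₁:ℕ):ℝ) • (Pi.single κ 1 : Fin d₁ → ℝ))
            + β • (((e₁:ℕ):ℝ) • (Pi.single κ 1 : Fin d₁ → ℝ)) = _
        rw [smul_smul, smul_smul, ← add_smul, h1]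
      · show α • (((1:ℕ):ℝ) • (Pi.single l 1 : Fin d₂ → ℝ))
            + β • (((e₂:ℕ):ℝ) • (Pi.single l 1 : Fin d₂ → ℝ)) = _
        rw [smul_smul, smul_smul, ← add_smul, h2]
    rwa [key] at hmem

lemma hull_eq (he₁ : 2 ≤ e₁) (he₂ : 2 ≤ e₂) :
    convexHull ℝ (insert 0 (genSet d₁ d₂ e₁ e₂)) = polytope d₁ d₂ e₁ e₂ := by
  apply Set.Subset.antisymm
  · exact convexHull_min (gen_subset_polytope d₁ d₂ e₁ e₂ he₁ he₂) (convex_polytope d₁ d₂ e₁ e₂)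
  · intro p hp
    obtain ⟨hx, hy, hs, ht, hts, hst⟩ := hp
    set s := ∑ κ, p.1 κ with hs_def
    set t := ∑ l, p.2 l with ht_def
    have hs0 : 0 ≤ s := Finset.sum_nonneg fun κ _ => hx κ
    have ht0 : 0 ≤ t := Finset.sum_nonneg fun l _ => hy l
    have he₁0 : (0:ℝ) < e₁ := by
      have : (2:ℝ) ≤ e₁ := by exact_mod_cast he₁
      linarith
    have he₂0 : (0:ℝ) < e₂ := by
      have : (2:ℝ) ≤ e₂ := by exact_mod_cast he₂
      linarith
    rcases eq_or_lt_of_le hs0 with h0 | hspos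
    · -- degenerate case : p = 0
      have hxz : ∀ κ, p.1 κ = 0 := fun κ =>
        (Finset.sum_eq_zero_iff_of_nonneg (fun κ _ => hx κ)).1 h0.symm κ (Finset.mem_univ κ)
      have htz : t = 0 := le_antisymm (by nlinarith) ht0
      have hyz : ∀ l, p.2 l = 0 := fun l =>
        (Finset.sum_eq_zero_iff_of_nonneg (fun l _ => hy l)).1 htz l (Finset.mem_univ l)
      have hp0 : p = 0 := Prod.ext (funext hxz) (funext hyz)
      rw [hp0]
      exact subset_convexHull ℝ _ (mem_insert _ _)
    · have htpos : 0 < t := by nlinarith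
      have hsne : s ≠ 0 := ne_of_gt hspos
      have htne : t ≠ 0 := ne_of_gt htpos
      have hq : ∀ κl : Fin d₁ × Fin d₂,
          (s • (Pi.single κl.1 1 : Fin d₁ → ℝ), t • (Pi.single κl.2 1 : Fin d₂ → ℝ))
            ∈ convexHull ℝ (insert 0 (genSet d₁ d₂ e₁ e₂)) :=
        fun κl => q_mem_hull d₁ d₂ e₁ e₂ he₁ he₂ κl.1 κl.2 s t hspos htpos hs ht hts hst
      have hwnn : ∀ κl : Fin d₁ × Fin d₂, 0 ≤ p.1 κl.1 * p.2 κl.2 / (s * t) :=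
        fun κl => div_nonneg (mul_nonneg (hx κl.1) (hy κl.2)) (by positivity)
      have hwsum : ∑ κl : Fin d₁ × Fin d₂, p.1 κl.1 * p.2 κl.2 / (s * t) = 1 := by
        rw [Fintype.sum_prod_type]
        have hinner : ∀ κ, ∑ l, p.1 κ * p.2 l / (s * t) = p.1 κ * t / (s * t) := by
          intro κ
          rw [← Finset.sum_div, ← Finset.mul_sum]
        simp_rw [hinner]
        rw [← Finset.sum_div, ← Finset.sum_mul]
        rw [← hs_def]
        field_simp
      have hmem := (convex_convexHull ℝ (insert 0 (genSet d₁ d₂ e₁ e₂))).sum_mem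
        (t := (Finset.univ : Finset (Fin d₁ × Fin d₂)))
        (w := fun κl => p.1 κl.1 * p.2 κl.2 / (s * t))
        (z := fun κl => (s • (Pi.single κl.1 1 : Fin d₁ → ℝ),
          t • (Pi.single κl.2 1 : Fin d₂ → ℝ)))
        (fun κl _ => hwnn κl) hwsum (fun κl _ => hq κl)
      have hval : ∑ κl : Fin d₁ × Fin d₂, (p.1 κl.1 * p.2 κl.2 / (s * t)) •
          ((s • (Pi.single κl.1 1 : Fin d₁ → ℝ), t • (Pi.single κl.2 1 : Fin d₂ → ℝ))
            : (Fin d₁ → ℝ) × (Fin d₂ → ℝ)) = p := by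
        apply Prod.ext
        · rw [Prod.fst_sum]
          show ∑ κl : Fin d₁ × Fin d₂, (p.1 κl.1 * p.2 κl.2 / (s * t)) •
            (s • (Pi.single κl.1 1 : Fin d₁ → ℝ)) = p.1
          rw [Fintype.sum_prod_type]
          have hinner : ∀ κ, ∑ l, (p.1 κ * p.2 l / (s * t)) •
              (s • (Pi.single κ 1 : Fin d₁ → ℝ))
              = (Pi.single κ (p.1 κ) : Fin d₁ → ℝ) := by
            intro κ
            rw [← Finset.sum_smul]
            have : (∑ l, p.1 κ * p.2 l / (s * t)) = p.1 κ / s := by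
              rw [← Finset.sum_div, ← Finset.mul_sum, ← ht_def]
              field_simp
            rw [this, smul_smul]
            rw [show p.1 κ / s * s = p.1 κ by field_simp]
            exact smul_single _ _
          simp_rw [hinner]
          exact Finset.univ_sum_single p.1
        · rw [Prod.snd_sum]
          show ∑ κl : Fin d₁ × Fin d₂, (p.1 κl.1 * p.2 κl.2 / (s * t)) •
            (t • (Pi.single κl.2 1 : Fin d₂ → ℝ)) = p.2
          rw [Fintype.sum_prod_type_right]
          have hinner : ∀ l, ∑ κ, (p.1 κ * p.2 l / (s * t)) •
              (t • (Pi.single l 1 : Fin d₂ → ℝ))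
              = (Pi.single l (p.2 l) : Fin d₂ → ℝ) := by
            intro l
            rw [← Finset.sum_smul]
            have : (∑ κ, p.1 κ * p.2 l / (s * t)) = p.2 l / t := by
              rw [← Finset.sum_div, ← Finset.sum_mul, ← hs_def]
              field_simp
            rw [this, smul_smul]
            rw [show p.2 l / t * t = p.2 l by field_simp]
            exact smul_single _ _
          simp_rw [hinner]
          exact Finset.univ_sum_single p.2
      rwa [hval] at hmem

end


section
variable (d₁ d₂ e₁ e₂ : ℕ)

def Rset : Set ((Fin d₁ → ℝ) × (Fin d₂ → ℝ)) :=
  (cornerSet d₁ e₁) ×ˢ (cornerSet d₂ e₂)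

def U1 : Set ((Fin d₁ → ℝ) × (Fin d₂ → ℝ)) :=
  Rset d₁ d₂ e₁ e₂ ∩ {p | (e₂:ℝ) * ∑ κ, p.1 κ < ∑ l, p.2 l}

def U2 : Set ((Fin d₁ → ℝ) × (Fin d₂ → ℝ)) :=
  Rset d₁ d₂ e₁ e₂ ∩ {p | (e₁:ℝ) * ∑ l, p.2 l < ∑ κ, p.1 κ}

lemma measurableSet_Rset : MeasurableSet (Rset d₁ d₂ e₁ e₂) :=
  (measurableSet_corner d₁ e₁).prod (measurableSet_corner d₂ e₂)

lemma measurable_sum_fst : Measurable (fun p : (Fin d₁ → ℝ) × (Fin d₂ → ℝ) => ∑ κ, p.1 κ) :=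
  measurable_sum'.comp measurable_fst

lemma measurable_sum_snd : Measurable (fun p : (Fin d₁ → ℝ) × (Fin d₂ → ℝ) => ∑ l, p.2 l) :=
  measurable_sum'.comp measurable_snd

lemma measurableSet_U1 : MeasurableSet (U1 d₁ d₂ e₁ e₂) :=
  (measurableSet_Rset d₁ d₂ e₁ e₂).inter
    (measurableSet_lt ((measurable_sum_fst d₁ d₂).const_mul _) (measurable_sum_snd d₁ d₂))

lemma measurableSet_U2 : MeasurableSet (U2 d₁ d₂ e₁ e₂) :=
  (measurableSet_Rset d₁ d₂ e₁ e₂).inter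
    (measurableSet_lt ((measurable_sum_snd d₁ d₂).const_mul _) (measurable_sum_fst d₁ d₂))

lemma poly_eq_diff : polytope d₁ d₂ e₁ e₂
    = Rset d₁ d₂ e₁ e₂ \ (U1 d₁ d₂ e₁ e₂ ∪ U2 d₁ d₂ e₁ e₂) := by
  ext p
  simp only [polytope, Rset, U1, U2, mem_setOf_eq, mem_diff, mem_union, mem_inter_iff,
    mem_prod, cornerSet, not_or, not_and, not_lt]
  constructor
  · rintro ⟨h1, h2, h3, h4, h5, h6⟩
    exact ⟨⟨⟨h1, h3⟩, ⟨h2, h4⟩⟩, fun _ => h5, fun _ => h6⟩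
  · rintro ⟨⟨⟨h1, h3⟩, ⟨h2, h4⟩⟩, h5, h6⟩
    exact ⟨h1, h2, h3, h4, h5 ⟨⟨h1, h3⟩, ⟨h2, h4⟩⟩, h6 ⟨⟨h1, h3⟩, ⟨h2, h4⟩⟩⟩

lemma disjoint_U1_U2 (he₁ : 2 ≤ e₁) (he₂ : 2 ≤ e₂) :
    Disjoint (U1 d₁ d₂ e₁ e₂) (U2 d₁ d₂ e₁ e₂) := by
  rw [Set.disjoint_left]
  rintro p ⟨⟨⟨hx, _⟩, ⟨hy, _⟩⟩, h1⟩ ⟨_, h2⟩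
  simp only [mem_setOf_eq] at h1 h2
  have hs0 : 0 ≤ ∑ κ, p.1 κ := Finset.sum_nonneg fun κ _ => hx κ
  have ht0 : 0 ≤ ∑ l, p.2 l := Finset.sum_nonneg fun l _ => hy l
  have he₁R : (2:ℝ) ≤ e₁ := by exact_mod_cast he₁
  have he₂R : (2:ℝ) ≤ e₂ := by exact_mod_cast he₂
  nlinarith

lemma volume_Rset (he₁0 : (0:ℝ) ≤ e₁) (he₂0 : (0:ℝ) ≤ e₂) :
    volume (Rset d₁ d₂ e₁ e₂)
      = ENNReal.ofReal ((e₁:ℝ)^d₁ * (e₂:ℝ)^d₂ / (d₁.factorial * d₂.factorial)) := by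
  rw [Rset, Measure.volume_eq_prod, Measure.prod_prod, volume_corner d₁ e₁ he₁0,
    volume_corner d₂ e₂ he₂0, ← ENNReal.ofReal_mul (by positivity)]
  rw [div_mul_div_comm]

lemma volume_U1 (hd₁ : 2 ≤ d₁) (hd₂ : 2 ≤ d₂) (he₁ : 2 ≤ e₁) (he₂ : 2 ≤ e₂) :
    volume (U1 d₁ d₂ e₁ e₂)
      = ENNReal.ofReal ((e₂:ℝ)^d₂ * d₂ / ((d₁ + d₂) * d₁.factorial * d₂.factorial)) := by
  have he₁R : (2:ℝ) ≤ e₁ := by exact_mod_cast he₁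
  have he₂R : (2:ℝ) ≤ e₂ := by exact_mod_cast he₂
  obtain ⟨m, rfl⟩ : ∃ m, d₁ = m + 1 := ⟨d₁ - 1, by omega⟩
  set g : ℝ → ℝ≥0∞ := fun s =>
    ENNReal.ofReal ((e₂:ℝ)^d₂ / d₂.factorial)
      - ENNReal.ofReal (((e₂:ℝ)*s)^d₂ / d₂.factorial) with hg_def
  have hg : Measurable g :=
    Measurable.sub measurable_const
      ((((measurable_const.mul measurable_id).pow_const d₂).div_const _).ennreal_ofReal)
  have hslice : ∀ x : Fin (m+1) → ℝ,
      (volume : Measure (Fin d₂ → ℝ)) (Prod.mk x ⁻¹' U1 (m+1) d₂ e₁ e₂)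
        = (cornerSet (m+1) (e₁:ℝ)).indicator (fun x => g (∑ κ, x κ)) x := by
    intro x
    by_cases hx : x ∈ cornerSet (m+1) (e₁:ℝ)
    · have hset : Prod.mk x ⁻¹' U1 (m+1) d₂ e₁ e₂
          = {y : Fin d₂ → ℝ | (∀ l, 0 ≤ y l) ∧ (e₂:ℝ) * ∑ κ, x κ < ∑ l, y l ∧ ∑ l, y l ≤ e₂} := by
        ext y
        simp only [U1, Rset, cornerSet, mem_preimage, mem_inter_iff, mem_prod, mem_setOf_eq]
        obtain ⟨hx1, hx2⟩ := hx
        constructor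
        · rintro ⟨⟨_, h2⟩, h3⟩; exact ⟨h2.1, h3, h2.2⟩
        · rintro ⟨h1, h2, h3⟩; exact ⟨⟨⟨hx1, hx2⟩, ⟨h1, h3⟩⟩, h2⟩
      have hsx : 0 ≤ ∑ κ, x κ := Finset.sum_nonneg fun κ _ => hx.1 κ
      rw [hset, volume_slab d₂ _ _ (by positivity) (by positivity), indicator_of_mem hx]
    · have hset : Prod.mk x ⁻¹' U1 (m+1) d₂ e₁ e₂ = ∅ := by
        ext y
        simp only [U1, Rset, mem_preimage, mem_inter_iff, mem_prod, mem_setOf_eq,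
          mem_empty_iff_false, iff_false, not_and]
        intro h
        exact absurd h.1 hx
      rw [hset, measure_empty, indicator_of_notMem hx]
  rw [Measure.volume_eq_prod, Measure.prod_apply (measurableSet_U1 _ _ _ _)]
  simp_rw [hslice]
  rw [lintegral_indicator (measurableSet_corner (m+1) (e₁:ℝ))]
  rw [lintegral_corner_sum (m+1) (by omega) (e₁:ℝ) (by linarith) g hg]
  simp only [Nat.add_sub_cancel]
  have hsplit : Ioc (0:ℝ) (e₁:ℝ) = Ioc 0 1 ∪ Ioc 1 (e₁:ℝ) :=
    (Ioc_union_Ioc_eq_Ioc (by norm_num) (by linarith)).symm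
  rw [hsplit, lintegral_union measurableSet_Ioc (Ioc_disjoint_Ioc_of_le le_rfl)]
  have hzero : ∫⁻ s in Ioc (1:ℝ) (e₁:ℝ),
      ENNReal.ofReal (s ^ m / m.factorial) * g s = 0 := by
    rw [setLIntegral_congr_fun_ae measurableSet_Ioc (ae_of_all _
      (fun s hs => ?_)), lintegral_zero]
    have h1 : (e₂:ℝ)^d₂ / d₂.factorial ≤ ((e₂:ℝ)*s)^d₂ / d₂.factorial := by
      have hp : (e₂:ℝ)^d₂ ≤ ((e₂:ℝ)*s)^d₂ :=
        pow_le_pow_left₀ (by linarith) (by nlinarith [hs.1]) d₂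
      have hf : (0:ℝ) < d₂.factorial := by positivity
      exact div_le_div_of_nonneg_right hp hf.le
    have : g s = 0 := tsub_eq_zero_of_le (ENNReal.ofReal_le_ofReal h1)
    rw [this, mul_zero]
  rw [hzero, add_zero]
  have hc : ∀ s ∈ Ioc (0:ℝ) 1, ENNReal.ofReal (s ^ m / m.factorial) * g s
      = ENNReal.ofReal (s ^ m / m.factorial *
          (((e₂:ℝ)^d₂ - ((e₂:ℝ)*s)^d₂) / d₂.factorial)) := by
    intro s hs
    have hs0 : 0 ≤ s := hs.1.le
    rw [hg_def]
    rw [show ((e₂:ℝ)^d₂ - ((e₂:ℝ)*s)^d₂) / d₂.factorial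
        = (e₂:ℝ)^d₂ / d₂.factorial - ((e₂:ℝ)*s)^d₂ / d₂.factorial by ring]
    rw [ENNReal.ofReal_mul (div_nonneg (pow_nonneg hs0 _) (by positivity)),
      ENNReal.ofReal_sub _ (div_nonneg (pow_nonneg (mul_nonneg (by positivity) hs0) _) (by positivity))]
  rw [setLIntegral_congr_fun_ae measurableSet_Ioc (ae_of_all _ hc)]
  rw [lintegral_Ioc_ofReal ?cont 1 zero_le_one ?nn]
  case cont => continuity
  case nn =>
    intro s hs
    have h1 : ((e₂:ℝ)*s)^d₂ ≤ (e₂:ℝ)^d₂ := by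
      apply pow_le_pow_left₀ (by nlinarith [hs.1.le])
      nlinarith [hs.2]
    have hs0 : 0 ≤ s := hs.1.le
    exact mul_nonneg (div_nonneg (pow_nonneg hs0 _) (by positivity))
      (div_nonneg (sub_nonneg.2 h1) (by positivity))
  congr 1
  have h1 : ((m:ℝ) + 1) ≠ 0 := by positivity
  have h2 : ((m:ℝ) + (d₂:ℝ) + 1) ≠ 0 := by positivity
  have h3 : (m.factorial : ℝ) ≠ 0 := by positivity
  have h4 : (d₂.factorial : ℝ) ≠ 0 := by positivity
  have h5 : ((m:ℝ) + 1 + (d₂:ℝ)) ≠ 0 := by positivity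
  have hfe : (fun s : ℝ => s ^ m / m.factorial *
      (((e₂:ℝ)^d₂ - ((e₂:ℝ)*s)^d₂) / d₂.factorial))
      = fun s : ℝ => ((e₂:ℝ)^d₂ / (m.factorial * d₂.factorial)) * s ^ m
          - ((e₂:ℝ)^d₂ / (m.factorial * d₂.factorial)) * s ^ (m + d₂) := by
    funext s
    rw [mul_pow, pow_add]
    field_simp
  rw [hfe]
  rw [intervalIntegral.integral_sub
    ((show Continuous fun s : ℝ => ((e₂:ℝ)^d₂ / (m.factorial * d₂.factorial)) * s ^ m
      from continuous_const.mul (continuous_pow m)).intervalIntegrable _ _)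
    ((show Continuous fun s : ℝ => ((e₂:ℝ)^d₂ / (m.factorial * d₂.factorial)) * s ^ (m + d₂)
      from continuous_const.mul (continuous_pow (m + d₂))).intervalIntegrable _ _)]
  rw [intervalIntegral.integral_const_mul, intervalIntegral.integral_const_mul,
    integral_pow, integral_pow]
  rw [Nat.factorial_succ]
  push_cast
  field_simp
  ring

lemma volume_U2 (hd₁ : 2 ≤ d₁) (hd₂ : 2 ≤ d₂) (he₁ : 2 ≤ e₁) (he₂ : 2 ≤ e₂) :
    volume (U2 d₁ d₂ e₁ e₂)
      = ENNReal.ofReal ((e₁:ℝ)^d₁ * d₁ / ((d₁ + d₂) * d₁.factorial * d₂.factorial)) := by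
  have he₁R : (2:ℝ) ≤ e₁ := by exact_mod_cast he₁
  have he₂R : (2:ℝ) ≤ e₂ := by exact_mod_cast he₂
  obtain ⟨m, hm⟩ : ∃ m, d₁ = m + 1 := ⟨d₁ - 1, by omega⟩
  subst hm
  set g : ℝ → ℝ≥0∞ := fun s =>
    ENNReal.ofReal ((s / (e₁:ℝ))^d₂ / d₂.factorial) with hg_def
  have hg : Measurable g :=
    (((measurable_id.div_const _).pow_const d₂).div_const _).ennreal_ofReal
  have hslice : ∀ x : Fin (m+1) → ℝ,
      (volume : Measure (Fin d₂ → ℝ)) (Prod.mk x ⁻¹' U2 (m+1) d₂ e₁ e₂)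
        = (cornerSet (m+1) (e₁:ℝ)).indicator (fun x => g (∑ κ, x κ)) x := by
    intro x
    by_cases hx : x ∈ cornerSet (m+1) (e₁:ℝ)
    · have hsx : 0 ≤ ∑ κ, x κ := Finset.sum_nonneg fun κ _ => hx.1 κ
      have hse : ∑ κ, x κ ≤ (e₁:ℝ) := hx.2
      have hset : Prod.mk x ⁻¹' U2 (m+1) d₂ e₁ e₂
          = {y : Fin d₂ → ℝ | (∀ l, 0 ≤ y l) ∧ ∑ l, y l < (∑ κ, x κ) / (e₁:ℝ)} := by
        ext y
        simp only [U2, Rset, cornerSet, mem_preimage, mem_inter_iff, mem_prod, mem_setOf_eq]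
        obtain ⟨hx1, hx2⟩ := hx
        constructor
        · rintro ⟨⟨_, h2⟩, h3⟩
          refine ⟨h2.1, ?_⟩
          rw [lt_div_iff₀ (by linarith : (0:ℝ) < e₁), mul_comm]
          exact h3
        · rintro ⟨h1, h2⟩
          have h3 : (e₁:ℝ) * ∑ l, y l < ∑ κ, x κ := by
            rw [lt_div_iff₀ (by linarith : (0:ℝ) < e₁)] at h2
            linarith [h2]
          have h4 : ∑ l, y l ≤ (e₂:ℝ) := by
            have : (∑ κ, x κ) / (e₁:ℝ) ≤ 1 := by
              rw [div_le_one (by linarith : (0:ℝ) < e₁)]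
              exact hse
            linarith
          exact ⟨⟨⟨hx1, hx2⟩, ⟨h1, h4⟩⟩, h3⟩
      rw [hset, volume_corner_lt d₂ (by omega) _ (by positivity), indicator_of_mem hx]
    · have hset : Prod.mk x ⁻¹' U2 (m+1) d₂ e₁ e₂ = ∅ := by
        ext y
        simp only [U2, Rset, mem_preimage, mem_inter_iff, mem_prod, mem_setOf_eq,
          mem_empty_iff_false, iff_false, not_and]
        intro h
        exact absurd h.1 hx
      rw [hset, measure_empty, indicator_of_notMem hx]
  rw [Measure.volume_eq_prod, Measure.prod_apply (measurableSet_U2 _ _ _ _)]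
  simp_rw [hslice]
  rw [lintegral_indicator (measurableSet_corner (m+1) (e₁:ℝ))]
  rw [lintegral_corner_sum (m+1) (by omega) (e₁:ℝ) (by linarith) g hg]
  simp only [Nat.add_sub_cancel]
  have hc : ∀ s ∈ Ioc (0:ℝ) (e₁:ℝ), ENNReal.ofReal (s ^ m / m.factorial) * g s
      = ENNReal.ofReal (s ^ m / m.factorial * ((s / (e₁:ℝ))^d₂ / d₂.factorial)) := by
    intro s hs
    have hs0 : 0 ≤ s := hs.1.le
    rw [hg_def, ENNReal.ofReal_mul (div_nonneg (pow_nonneg hs0 _) (by positivity))]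
  rw [setLIntegral_congr_fun_ae measurableSet_Ioc (ae_of_all _ hc)]
  rw [lintegral_Ioc_ofReal ?cont (e₁:ℝ) (by linarith) ?nn]
  case cont => continuity
  case nn =>
    intro s hs
    have hs0 : 0 ≤ s := hs.1.le
    positivity
  congr 1
  have he₁0 : (0:ℝ) < e₁ := by linarith
  have h1 : ((m:ℝ) + (d₂:ℝ) + 1) ≠ 0 := by positivity
  have h3 : (m.factorial : ℝ) ≠ 0 := by positivity
  have h4 : (d₂.factorial : ℝ) ≠ 0 := by positivity
  have h5 : ((e₁:ℝ))^d₂ ≠ 0 := by positivity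
  have hfe : (fun s : ℝ => s ^ m / m.factorial * ((s / (e₁:ℝ))^d₂ / d₂.factorial))
      = fun s : ℝ => (1 / ((e₁:ℝ)^d₂ * m.factorial * d₂.factorial)) * s ^ (m + d₂) := by
    funext s
    rw [div_pow, pow_add]
    field_simp
  rw [hfe, intervalIntegral.integral_const_mul, integral_pow]
  have hpow : (e₁:ℝ) ^ (m + d₂ + 1) = (e₁:ℝ)^(m+1) * (e₁:ℝ)^d₂ := by
    rw [← pow_add]
    ring_nf
  rw [Nat.factorial_succ]
  push_cast
  rw [hpow]
  field_simp
  ring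

end


lemma volume_polytope (hd₁ : 2 ≤ d₁) (hd₂ : 2 ≤ d₂) (he₁ : 2 ≤ e₁) (he₂ : 2 ≤ e₂) :
    volume (polytope d₁ d₂ e₁ e₂)
      = ENNReal.ofReal ((e₁:ℝ)^d₁ * (e₂:ℝ)^d₂ / (d₁.factorial * d₂.factorial)
          - ((e₂:ℝ)^d₂ * d₂ / ((d₁ + d₂) * d₁.factorial * d₂.factorial)
            + (e₁:ℝ)^d₁ * d₁ / ((d₁ + d₂) * d₁.factorial * d₂.factorial))) := by
  have he₁R : (2:ℝ) ≤ e₁ := by exact_mod_cast he₁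
  have he₂R : (2:ℝ) ≤ e₂ := by exact_mod_cast he₂
  have hsub : U1 d₁ d₂ e₁ e₂ ∪ U2 d₁ d₂ e₁ e₂ ⊆ Rset d₁ d₂ e₁ e₂ :=
    union_subset inter_subset_left inter_subset_left
  have hmu : volume (U1 d₁ d₂ e₁ e₂ ∪ U2 d₁ d₂ e₁ e₂)
      = ENNReal.ofReal ((e₂:ℝ)^d₂ * d₂ / ((d₁ + d₂) * d₁.factorial * d₂.factorial))
        + ENNReal.ofReal ((e₁:ℝ)^d₁ * d₁ / ((d₁ + d₂) * d₁.factorial * d₂.factorial)) := by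
    rw [measure_union (disjoint_U1_U2 d₁ d₂ e₁ e₂ he₁ he₂) (measurableSet_U2 d₁ d₂ e₁ e₂)]
    rw [volume_U1 d₁ d₂ e₁ e₂ hd₁ hd₂ he₁ he₂, volume_U2 d₁ d₂ e₁ e₂ hd₁ hd₂ he₁ he₂]
  rw [poly_eq_diff]
  rw [measure_diff hsub
    ((measurableSet_U1 d₁ d₂ e₁ e₂).union (measurableSet_U2 d₁ d₂ e₁ e₂)).nullMeasurableSet
    (by rw [hmu]; exact ENNReal.add_ne_top.2 ⟨ENNReal.ofReal_ne_top, ENNReal.ofReal_ne_top⟩)]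
  rw [hmu, volume_Rset d₁ d₂ e₁ e₂ (by linarith) (by linarith)]
  rw [← ENNReal.ofReal_add (by positivity) (by positivity)]
  rw [← ENNReal.ofReal_sub _ (by positivity)]

end ConicAux

open ConicAux in
/-- The normalized volume of `conv(A ∪ {0})` for the conic coupling matrix
`A` (columns `i·e_κ ⊕ j·e_λ`, `(κ,i,λ,j) ∈ [d₁]×[e₁]×[d₂]×[e₂]`) equals
`C(d₁+d₂,d₁)·((e₁^{d₁}−1)(e₂^{d₂}−1) + d₁/(d₁+d₂)·(e₂^{d₂}−1)
  + d₂/(d₁+d₂)·(e₁^{d₁}−1))`. -/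
theorem conic_coupling_degree_formula
    (d₁ d₂ e₁ e₂ : ℕ) (hd₁ : 2 ≤ d₁) (hd₂ : 2 ≤ d₂) (he₁ : 2 ≤ e₁) (he₂ : 2 ≤ e₂) :
    ((d₁ + d₂).factorial : ℝ) *
      (volume (convexHull ℝ
        (insert (0 : (Fin d₁ → ℝ) × (Fin d₂ → ℝ))
          {v | ∃ (κ : Fin d₁) (i : ℕ) (lam : Fin d₂) (j : ℕ),
            1 ≤ i ∧ i ≤ e₁ ∧ 1 ≤ j ∧ j ≤ e₂ ∧
            v = ((i : ℝ) • (Pi.single κ 1 : Fin d₁ → ℝ), (j : ℝ) • (Pi.single lam 1 : Fin d₂ → ℝ))}))).toReal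
    = ((d₁ + d₂).choose d₁ : ℝ) *
        (((e₁ : ℝ) ^ d₁ - 1) * ((e₂ : ℝ) ^ d₂ - 1)
          + (d₁ : ℝ) / (d₁ + d₂) * ((e₂ : ℝ) ^ d₂ - 1)
          + (d₂ : ℝ) / (d₁ + d₂) * ((e₁ : ℝ) ^ d₁ - 1)) := by
  have hset : {v : (Fin d₁ → ℝ) × (Fin d₂ → ℝ) | ∃ (κ : Fin d₁) (i : ℕ) (lam : Fin d₂) (j : ℕ),
      1 ≤ i ∧ i ≤ e₁ ∧ 1 ≤ j ∧ j ≤ e₂ ∧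
      v = ((i : ℝ) • (Pi.single κ 1 : Fin d₁ → ℝ), (j : ℝ) • (Pi.single lam 1 : Fin d₂ → ℝ))}
      = genSet d₁ d₂ e₁ e₂ := rfl
  rw [hset, hull_eq d₁ d₂ e₁ e₂ he₁ he₂, volume_polytope hd₁ hd₂ he₁ he₂]
  have he₁R : (2:ℝ) ≤ e₁ := by exact_mod_cast he₁
  have he₂R : (2:ℝ) ≤ e₂ := by exact_mod_cast he₂
  have hd₁R : (2:ℝ) ≤ d₁ := by exact_mod_cast hd₁
  have hd₂R : (2:ℝ) ≤ d₂ := by exact_mod_cast hd₂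
  set X := (e₁:ℝ)^d₁ with hX_def
  set Y := (e₂:ℝ)^d₂ with hY_def
  have hX : (4:ℝ) ≤ X := by
    calc (4:ℝ) = 2^2 := by norm_num
    _ ≤ (2:ℝ)^d₁ := pow_le_pow_right₀ one_le_two hd₁
    _ ≤ X := pow_le_pow_left₀ (by norm_num) he₁R d₁
  have hY : (4:ℝ) ≤ Y := by
    calc (4:ℝ) = 2^2 := by norm_num
    _ ≤ (2:ℝ)^d₂ := pow_le_pow_right₀ one_le_two hd₂
    _ ≤ Y := pow_le_pow_left₀ (by norm_num) he₂R d₂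
  have hDpos : (0:ℝ) < (d₁:ℝ) + d₂ := by linarith
  have hF₁ : (0:ℝ) < d₁.factorial := by positivity
  have hF₂ : (0:ℝ) < d₂.factorial := by positivity
  have hVeq : X * Y / (d₁.factorial * d₂.factorial)
      - (Y * d₂ / ((d₁ + d₂) * d₁.factorial * d₂.factorial)
        + X * d₁ / ((d₁ + d₂) * d₁.factorial * d₂.factorial))
      = (((d₁:ℝ) + d₂) * (X * Y) - (Y * d₂ + X * d₁))
          / (((d₁:ℝ) + d₂) * d₁.factorial * d₂.factorial) := by
    push_cast
    field_simp
  have hXY : (0:ℝ) ≤ X * Y - X - Y := by nlinarith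
  have hb1 : Y * (d₂:ℝ) ≤ Y * ((d₁:ℝ) + d₂) := by nlinarith
  have hb2 : X * (d₁:ℝ) ≤ X * ((d₁:ℝ) + d₂) := by nlinarith
  have hb3 : (0:ℝ) ≤ ((d₁:ℝ) + d₂) * (X * Y - X - Y) := mul_nonneg hDpos.le hXY
  have hnum : (0:ℝ) ≤ ((d₁:ℝ) + d₂) * (X * Y) - (Y * d₂ + X * d₁) := by nlinarith
  rw [hVeq, ENNReal.toReal_ofReal (div_nonneg hnum (by positivity))]
  have hch : (((d₁+d₂).choose d₁ : ℕ) : ℝ) * (d₁.factorial : ℝ) * (d₂.factorial : ℝ)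
      = ((d₁+d₂).factorial : ℝ) := by
    have h := Nat.add_choose_mul_factorial_mul_factorial d₁ d₂
    rw [← Nat.choose_symm_add] at h
    exact_mod_cast congrArg (Nat.cast (R := ℝ)) h
  rw [← hch]
  push_cast
  field_simp
  ring
end

section
/- For the 4 × 16 matrix A of the conic coupling problem with d₁ = e₁ = d₂ = e₂ = 2, the cone pos(A) equals { b ∈ ℝ⁴_{≥0} : b₁ + b₂ ≤ 2b₃ + 2b₄ and b₃ + b₄ ≤ 2b₁ + 2b₂ }. -/
set_option maxHeartbeats 2000000 in
/-- For the `4 × 16` conic coupling matrix `A` with `d₁ = e₁ = d₂ = e₂ = 2`,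
the cone `pos(A)` equals
`{b ∈ ℝ⁴_{≥0} : b₁+b₂ ≤ 2b₃+2b₄ and b₃+b₄ ≤ 2b₁+2b₂}`. -/
theorem pos_cone_2222
    (A : Matrix (Fin 4) (Fin 16) ℝ)
    (hA : A = !![1,1,1,1,2,2,2,2,0,0,0,0,0,0,0,0;
                 0,0,0,0,0,0,0,0,1,1,1,1,2,2,2,2;
                 1,2,0,0,1,2,0,0,1,2,0,0,1,2,0,0;
                 0,0,1,2,0,0,1,2,0,0,1,2,0,0,1,2]) :
    {b : Fin 4 → ℝ | ∃ c : Fin 16 → ℝ, (∀ j, 0 ≤ c j) ∧ b = A.mulVec c} =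
    {b : Fin 4 → ℝ | (∀ i, 0 ≤ b i) ∧
      b 0 + b 1 ≤ 2 * b 2 + 2 * b 3 ∧
      b 2 + b 3 ≤ 2 * b 0 + 2 * b 1} := by
  subst hA
  ext b
  simp only [Set.mem_setOf_eq]
  constructor
  · rintro ⟨c, hc, rfl⟩
    refine ⟨fun i => ?_, ?_, ?_⟩
    · fin_cases i <;>
        simp [Matrix.mulVec, dotProduct, Fin.sum_univ_succ, Fin.succ] <;>
        linarith [hc 0, hc 1, hc 2, hc 3, hc 4, hc 5, hc 6, hc 7, hc 8, hc 9, hc 10,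
          hc 11, hc 12, hc 13, hc 14, hc 15]
    · simp [Matrix.mulVec, dotProduct, Fin.sum_univ_succ, Fin.succ]
      linarith [hc 0, hc 1, hc 2, hc 3, hc 4, hc 5, hc 6, hc 7, hc 8, hc 9, hc 10,
        hc 11, hc 12, hc 13, hc 14, hc 15]
    · simp [Matrix.mulVec, dotProduct, Fin.sum_univ_succ, Fin.succ]
      linarith [hc 0, hc 1, hc 2, hc 3, hc 4, hc 5, hc 6, hc 7, hc 8, hc 9, hc 10,
        hc 11, hc 12, hc 13, hc 14, hc 15]
  · rintro ⟨hb, h1, h2⟩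
    by_cases hs : b 0 + b 1 = 0
    · have hb0 : b 0 = 0 := by have := hb 0; have := hb 1; linarith
      have hb1 : b 1 = 0 := by have := hb 0; have := hb 1; linarith
      have hb2 : b 2 = 0 := by have := hb 2; have := hb 3; linarith
      have hb3 : b 3 = 0 := by have := hb 2; have := hb 3; linarith
      refine ⟨0, fun j => le_refl 0, ?_⟩
      funext i
      fin_cases i <;>
        simp [Matrix.mulVec, dotProduct, hb0, hb1, hb2, hb3]
    · have hs' : 0 < b 0 + b 1 := lt_of_le_of_ne (by have := hb 0; have := hb 1; linarith) (Ne.symm hs)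
      have ht' : 0 < b 2 + b 3 := by
        rcases lt_or_eq_of_le (show (0:ℝ) ≤ b 2 + b 3 by have := hb 2; have := hb 3; linarith) with h | h
        · exact h
        · exfalso; linarith
      set s := b 0 + b 1 with hsdef
      set t := b 2 + b 3 with htdef
      have ha : 0 ≤ 2 * t - s := by linarith
      have hβ : 0 ≤ 2 * s - t := by linarith
      have hD : 0 < 3 * s * t := by positivity
      have key : ∀ p q r : ℝ, 0 ≤ p → 0 ≤ q → 0 ≤ r → 0 ≤ p * q * r / (3 * s * t) :=
        fun p q r hp hq hr => div_nonneg (mul_nonneg (mul_nonneg hp hq) hr) hD.le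
      refine ⟨![0, (2*t-s) * b 0 * b 2 / (3*s*t), 0, (2*t-s) * b 0 * b 3 / (3*s*t),
               (2*s-t) * b 0 * b 2 / (3*s*t), 0, (2*s-t) * b 0 * b 3 / (3*s*t), 0,
               0, (2*t-s) * b 1 * b 2 / (3*s*t), 0, (2*t-s) * b 1 * b 3 / (3*s*t),
               (2*s-t) * b 1 * b 2 / (3*s*t), 0, (2*s-t) * b 1 * b 3 / (3*s*t), 0],
             fun j => ?_, ?_⟩
      · fin_cases j <;>
          simp only [Matrix.cons_val', Matrix.cons_val_zero, Matrix.cons_val_one, Matrix.head_cons,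
            Matrix.cons_val_fin_one, Matrix.empty_val'] <;>
          first
            | exact le_refl 0
            | exact key _ _ _ ha (hb 0) (hb 2)
            | exact key _ _ _ ha (hb 0) (hb 3)
            | exact key _ _ _ ha (hb 1) (hb 2)
            | exact key _ _ _ ha (hb 1) (hb 3)
            | exact key _ _ _ hβ (hb 0) (hb 2)
            | exact key _ _ _ hβ (hb 0) (hb 3)
            | exact key _ _ _ hβ (hb 1) (hb 2)
            | exact key _ _ _ hβ (hb 1) (hb 3)
      · funext i
        have hsne : s ≠ 0 := hs'.ne'
        have htne : t ≠ 0 := ht'.ne'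
        fin_cases i <;>
          simp [Matrix.mulVec, dotProduct, Fin.sum_univ_succ, Fin.succ] <;>
          field_simp <;>
          ring_nf <;>
          simp only [hsdef, htdef] <;>
          ring
end
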